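/- arXiv:2507.00492 — 10 statements merged into one kernel-verified Lean document; each statement's English description precedes it below -/
import Mathlib

section
/- Let A be a vector space over a field k of characteristic 0 equipped with a bilinear operation ∘, and let A[t,t⁻¹] := A ⊗ k[t,t⁻¹] carry the bilinear bracket determined by [a⊗tⁱ, b⊗tʲ] = i(a∘b)⊗t^{i+j−1} − j(b∘a)⊗t^{i+j−1} for all a,b ∈ A and i,j ∈ ℤ. Then (A[t,t⁻¹], [·,·]) is a Lie algebra if and only if (A,∘) is a Novikov algebra. -/
open TensorProduct

noncomputable section

variable {k : Type*} [Field k]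
section AlgDefs
variable {A : Type*} [AddCommGroup A] [Module k A]

/-- A pre-Lie algebra structure: `(a∘b)∘c − a∘(b∘c) = (b∘a)∘c − b∘(a∘c)`. -/
def IsPreLie (op : A →ₗ[k] A →ₗ[k] A) : Prop :=
  ∀ a b c : A, op (op a b) c - op a (op b c) = op (op b a) c - op b (op a c)

/-- A Novikov algebra: a pre-Lie algebra with `(a∘b)∘c = (a∘c)∘b`. -/
def IsNovikov (op : A →ₗ[k] A →ₗ[k] A) : Prop :=
  IsPreLie op ∧ ∀ a b c : A, op (op a b) c = op (op a c) b

/-- A pre-Novikov algebra with operations `l = ◁` and `r = ▷`,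
writing `a∘b := a◁b + a▷b`. -/
def IsPreNovikov (l r : A →ₗ[k] A →ₗ[k] A) : Prop :=
  (∀ a b c : A, r a (r b c) = r (l a b + r a b) c + r b (r a c) - r (l b a + r b a) c) ∧
  (∀ a b c : A, r a (l b c) = l (r a b) c + l b (l a c + r a c) - l (l b a) c) ∧
  (∀ a b c : A, r (l a b + r a b) c = l (r a c) b) ∧
  (∀ a b c : A, l (l a b) c = l (l a c) b)

/-- A right Novikov algebra. -/
def IsRightNovikov (d : A →ₗ[k] A →ₗ[k] A) : Prop :=
  (∀ x y z : A, d (d x y) z - d x (d y z) = d (d x z) y - d x (d z y)) ∧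
  (∀ x y z : A, d x (d y z) = d y (d x z))

/-- A right Novikov dialgebra with operations `dl = ⊣` and `dr = ⊢`. -/
def IsRightNovikovDialgebra (dl dr : A →ₗ[k] A →ₗ[k] A) : Prop :=
  (∀ x y z : A, dr x (dr y z) = dr y (dr x z)) ∧
  (∀ x y z : A, dr x (dl y z) = dl y (dl x z)) ∧
  (∀ x y z : A, dr (dr x y - dl x y) z = 0) ∧
  (∀ x y z : A, dl x (dr y z - dl y z) = 0) ∧
  (∀ x y z : A, dr x (dr y z - dl z y) = dr (dr x y) z - dl (dr x z) y) ∧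
  (∀ x y z : A, dl x (dr y z - dl z y) = dl (dl x y) z - dl (dl x z) y)

/-- A quadratic right Novikov algebra: a right Novikov algebra with a symmetric
nondegenerate bilinear form satisfying `(x⋄y,z) = −(x, y⋄z + z⋄y)`. -/
def IsQuadraticRightNovikov (d : A →ₗ[k] A →ₗ[k] A) (bf : A →ₗ[k] A →ₗ[k] k) : Prop :=
  IsRightNovikov d ∧ (∀ x y : A, bf x y = bf y x) ∧
  (∀ x : A, (∀ y : A, bf x y = 0) → x = 0) ∧
  (∀ x y z : A, bf (d x y) z = - bf x (d y z + d z y))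

/-- A quadratic pre-Lie algebra: a pre-Lie algebra with a skew-symmetric nondegenerate
bilinear form satisfying `ω(u∘v,w) = −ω(v, u∘w − w∘u)`. -/
def IsQuadraticPreLie (op : A →ₗ[k] A →ₗ[k] A) (w : A →ₗ[k] A →ₗ[k] k) : Prop :=
  IsPreLie op ∧ (∀ u v : A, w u v = - w v u) ∧
  (∀ u : A, (∀ v : A, w u v = 0) → u = 0) ∧
  (∀ u v x : A, w (op u v) x = - w v (op u x - op x u))

end AlgDefs

/-!
On generators the bracket is `[a tⁱ, b tʲ] = (i a∘b − j b∘a) t^{i+j−1}`, so it is antisymmetric,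
and its Jacobiator on `a tⁱ, b tʲ, c tˡ` is a single term `J(a,b,c;i,j,l) t^{i+j+l−2}` with `J`
polynomial in `i, j, l`. As these elements span and the bracket is bilinear, the Lie axioms amount
to `J ≡ 0` (antisymmetry gives alternation since `2 ≠ 0`). For a Novikov algebra `J` vanishes
identically; conversely its values at `(i,j,l) = (1,1,0)` and `(2,0,0)` are the left-symmetry
identity and twice the right-commutativity identity.
-/

open LaurentPolynomial

namespace LinearMap

variable {R M : Type*} [CommSemiring R] [AddCommMonoid M] [Module R M]

theorem add_swap_eq_zero_of_span {N ι : Type*} [AddCommMonoid N] [Module R N] {v : ι → M}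
    (hv : Submodule.span R (Set.range v) = ⊤) {f : M →ₗ[R] M →ₗ[R] N}
    (h : ∀ i j, f (v i) (v j) + f (v j) (v i) = 0) (x y : M) : f x y + f y x = 0 := by
  have hf : f + f.flip = 0 :=
    ext_on_range hv fun i => ext_on_range hv fun j => by simpa using h i j
  simpa using congr($hf x y)

def jacobiator (br : M →ₗ[R] M →ₗ[R] M) (x y z : M) : M :=
  br (br x y) z + br (br y z) x + br (br z x) y

theorem jacobiator_eq_zero_of_span {ι : Type*} {v : ι → M}
    (hv : Submodule.span R (Set.range v) = ⊤) {br : M →ₗ[R] M →ₗ[R] M}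
    (h : ∀ i j l, br.jacobiator (v i) (v j) (v l) = 0) (x y z : M) :
    br.jacobiator x y z = 0 := by
  -- By cyclic symmetry each argument in turn can be moved to the last slot, where the
  -- jacobiator is linear and hence determined by its values on the `v l`.
  have linear_right :
      ∀ x y, (∀ l, br.jacobiator x y (v l) = 0) → ∀ z, br.jacobiator x y z = 0 := by
    intro x y hxy
    have hJ : br (br x y) + br.flip x ∘ₗ br y + br.flip y ∘ₗ br.flip x = 0 :=
      ext_on_range hv fun l => by simpa [jacobiator] using hxy l
    intro z
    simpa [jacobiator] using congr($hJ z)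
  have cyclic : ∀ x y z, br.jacobiator x y z = br.jacobiator z x y := by
    intro x y z
    simp only [jacobiator]
    abel
  have h₂ : ∀ i j z, br.jacobiator (v i) (v j) z = 0 := fun i j => linear_right _ _ (h i j)
  have h₁ : ∀ i y z, br.jacobiator (v i) y z = 0 := fun i y =>
    linear_right _ _ fun l => (cyclic _ _ _).trans (h₂ l i y)
  exact linear_right x y (fun l => (cyclic _ _ _).trans (h₁ l x y)) z

end LinearMap

namespace LaurentPolynomial

variable {R M : Type*} [CommSemiring R] [AddCommMonoid M] [Module R M]

theorem span_range_tmul_T :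
    Submodule.span R (Set.range fun p : M × ℤ => p.1 ⊗ₜ[R] (T p.2 : R[T;T⁻¹])) = ⊤ := by
  have hT : Submodule.span R (Set.range (T : ℤ → R[T;T⁻¹])) = ⊤ :=
    (AddMonoidAlgebra.basis ℤ R).span_eq
  rw [← TensorProduct.map₂_mk_top_top_eq_top, ← Submodule.span_univ, ← hT,
    Submodule.map₂_span_span]
  congr 1
  ext
  simp [Set.mem_image2, eq_comm]

theorem tmul_T_eq_zero_iff {m : M} {n : ℤ} : m ⊗ₜ[R] (T n : R[T;T⁻¹]) = 0 ↔ m = 0 := by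
  refine ⟨fun h => ?_, fun h => h ▸ TensorProduct.zero_tmul _ _⟩
  rw [show (T n : R[T;T⁻¹]) = AddMonoidAlgebra.basis ℤ R n from rfl] at h
  simpa [-AddMonoidAlgebra.basis_apply] using congr(TensorProduct.rid R M
    (LinearMap.lTensor M ((AddMonoidAlgebra.basis ℤ R).coord n) $h))

end LaurentPolynomial

section Affinization

variable {A : Type*} [AddCommGroup A] [Module k A] (mul : A →ₗ[k] A →ₗ[k] A)

def affBracket (a : A) (i : ℤ) (b : A) (j : ℤ) : A :=
  i • mul a b - j • mul b a

def affJacobiator (a b c : A) (i j l : ℤ) : A :=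
  affBracket mul (affBracket mul a i b j) (i + j - 1) c l
    + affBracket mul (affBracket mul b j c l) (j + l - 1) a i
    + affBracket mul (affBracket mul c l a i) (l + i - 1) b j

theorem affBracket_add_swap (a b : A) (i j : ℤ) :
    affBracket mul a i b j + affBracket mul b j a i = 0 := by
  simp only [affBracket]
  abel

variable {mul}

theorem IsNovikov.affJacobiator_eq_zero (h : IsNovikov mul) (a b c : A) (i j l : ℤ) :
    affJacobiator mul a b c i j l = 0 := by
  simp only [affJacobiator, affBracket, map_sub, map_zsmul, LinearMap.sub_apply,
    LinearMap.smul_apply]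
  linear_combination (norm := module) (i * (i - 1)) • h.2 a b c + (j * (1 - j)) • h.2 b a c
    + (l * (1 - l)) • h.2 c b a + (i * j) • h.1 a b c + (j * l) • h.1 b c a - (i * l) • h.1 a c b

theorem isPreLie_of_affJacobiator (h : ∀ a b c : A, affJacobiator mul a b c 1 1 0 = 0) :
    IsPreLie mul := by
  intro a b c
  have habc := h a b c
  simp only [affJacobiator, affBracket, map_sub, map_zsmul, LinearMap.sub_apply,
    LinearMap.smul_apply] at habc
  linear_combination (norm := module) habc

theorem mul_right_comm_of_affJacobiator [NeZero (2 : k)]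
    (h : ∀ a b c : A, affJacobiator mul a b c 2 0 0 = 0) (a b c : A) :
    mul (mul a b) c = mul (mul a c) b := by
  have habc := h a b c
  simp only [affJacobiator, affBracket, map_sub, map_zsmul, LinearMap.sub_apply,
    LinearMap.smul_apply] at habc
  have h2 : (2 : k) • (mul (mul a b) c - mul (mul a c) b) = 0 := by
    linear_combination (norm := module) habc
  exact sub_eq_zero.mp ((smul_eq_zero_iff_right two_ne_zero).mp h2)

theorem isNovikov_iff_affJacobiator_eq_zero [NeZero (2 : k)] :
    IsNovikov mul ↔ ∀ (a b c : A) (i j l : ℤ), affJacobiator mul a b c i j l = 0 :=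
  ⟨IsNovikov.affJacobiator_eq_zero, fun h =>
    ⟨isPreLie_of_affJacobiator fun a b c => h a b c 1 1 0,
      mul_right_comm_of_affJacobiator fun a b c => h a b c 2 0 0⟩⟩

end Affinization

section AffinizationBracket

variable {A : Type*} [AddCommGroup A] [Module k A]

def IsAffinizationBracket (mul : A →ₗ[k] A →ₗ[k] A)
    (br : A ⊗[k] k[T;T⁻¹] →ₗ[k] A ⊗[k] k[T;T⁻¹] →ₗ[k] A ⊗[k] k[T;T⁻¹]) : Prop :=
  ∀ (a b : A) (i j : ℤ), br (a ⊗ₜ T i) (b ⊗ₜ T j)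
    = i • (mul a b ⊗ₜ T (i + j - 1)) - j • (mul b a ⊗ₜ T (i + j - 1))

variable {mul : A →ₗ[k] A →ₗ[k] A}
  {br : A ⊗[k] k[T;T⁻¹] →ₗ[k] A ⊗[k] k[T;T⁻¹] →ₗ[k] A ⊗[k] k[T;T⁻¹]}

namespace IsAffinizationBracket

theorem apply_tmul_T (h : IsAffinizationBracket mul br) (a b : A) (i j : ℤ) :
    br (a ⊗ₜ T i) (b ⊗ₜ T j) = affBracket mul a i b j ⊗ₜ T (i + j - 1) := by
  rw [h, affBracket, TensorProduct.sub_tmul, TensorProduct.smul_tmul', TensorProduct.smul_tmul']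

theorem add_swap_eq_zero (h : IsAffinizationBracket mul br) (x y : A ⊗[k] k[T;T⁻¹]) :
    br x y + br y x = 0 := by
  refine LinearMap.add_swap_eq_zero_of_span span_range_tmul_T (fun p q => ?_) x y
  rw [h.apply_tmul_T, h.apply_tmul_T, add_comm q.2, ← TensorProduct.add_tmul,
    affBracket_add_swap, TensorProduct.zero_tmul]

theorem jacobiator_tmul_T (h : IsAffinizationBracket mul br) (a b c : A) (i j l : ℤ) :
    br.jacobiator (a ⊗ₜ T i) (b ⊗ₜ T j) (c ⊗ₜ T l)
      = affJacobiator mul a b c i j l ⊗ₜ T (i + j + l - 2) := by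
  simp only [LinearMap.jacobiator, h.apply_tmul_T, affJacobiator, TensorProduct.add_tmul]
  rw [show i + j - 1 + l - 1 = i + j + l - 2 by ring,
    show j + l - 1 + i - 1 = i + j + l - 2 by ring, show l + i - 1 + j - 1 = i + j + l - 2 by ring]

theorem jacobiator_eq_zero_iff (h : IsAffinizationBracket mul br) :
    (∀ x y z, br.jacobiator x y z = 0)
      ↔ ∀ (a b c : A) (i j l : ℤ), affJacobiator mul a b c i j l = 0 := by
  constructor
  · intro hJ a b c i j l
    rw [← tmul_T_eq_zero_iff (R := k) (n := i + j + l - 2), ← h.jacobiator_tmul_T]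
    exact hJ _ _ _
  · intro hJ
    refine LinearMap.jacobiator_eq_zero_of_span span_range_tmul_T fun p q r => ?_
    rw [h.jacobiator_tmul_T, hJ, TensorProduct.zero_tmul]

theorem apply_self [NeZero (2 : k)] (h : IsAffinizationBracket mul br) (x : A ⊗[k] k[T;T⁻¹]) :
    br x x = 0 := by
  have hx : (2 : k) • br x x = 0 := by rw [two_smul]; exact h.add_swap_eq_zero x x
  exact (smul_eq_zero_iff_right two_ne_zero).mp hx

end IsAffinizationBracket

end AffinizationBracket

/-- The bracket `[a⊗tⁱ, b⊗tʲ] = i(a∘b)⊗t^{i+j−1} − j(b∘a)⊗t^{i+j−1}`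
on `A ⊗ k[t,t⁻¹]` defines a Lie algebra if and only if `(A, ∘)` is a Novikov algebra. -/
theorem affinization_lie_iff_novikov (k A : Type*) [Field k] [CharZero k]
    [AddCommGroup A] [Module k A]
    (mul : A →ₗ[k] A →ₗ[k] A)
    (br : A ⊗[k] LaurentPolynomial k →ₗ[k]
      A ⊗[k] LaurentPolynomial k →ₗ[k] A ⊗[k] LaurentPolynomial k)
    (hbr : ∀ (a b : A) (i j : ℤ),
      br (a ⊗ₜ[k] (LaurentPolynomial.T i : LaurentPolynomial k))
          (b ⊗ₜ[k] (LaurentPolynomial.T j : LaurentPolynomial k))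
        = i • (mul a b ⊗ₜ[k] (LaurentPolynomial.T (i + j - 1) : LaurentPolynomial k))
          - j • (mul b a ⊗ₜ[k] (LaurentPolynomial.T (i + j - 1) : LaurentPolynomial k))) :
    ((∀ x, br x x = 0) ∧
        ∀ x y z, br (br x y) z + br (br y z) x + br (br z x) y = 0)
      ↔ IsNovikov mul := by
  have hbr : IsAffinizationBracket mul br := hbr
  rw [isNovikov_iff_affJacobiator_eq_zero, ← hbr.jacobiator_eq_zero_iff]
  exact ⟨fun h => h.2, fun h => ⟨hbr.apply_self, h⟩⟩
end
end

section
/- Let (A,◁,▷) be a pre-Novikov algebra over a field k of characteristic 0. Then the bilinear operation a∘b := a◁b + a▷b makes (A,∘) a Novikov algebra. -/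
open TensorProduct

noncomputable section

variable {k : Type*} [Field k]
/-- For a pre-Novikov algebra `(A, ◁, ▷)`, the operation
`a∘b := a◁b + a▷b` makes `(A, ∘)` a Novikov algebra. -/
theorem preNovikov_associated_novikov (k A : Type*) [Field k] [CharZero k]
    [AddCommGroup A] [Module k A]
    (l r : A →ₗ[k] A →ₗ[k] A) (h : IsPreNovikov l r) :
    IsNovikov (l + r) := by
  obtain ⟨h1, h2, h3, h4⟩ := h
  constructor
  · intro a b c
    have e1 := h1 a b c
    have e2 := h1 b a c
    have e3 := h2 a b c
    have e4 := h2 b a c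
    simp only [LinearMap.add_apply, map_add] at e1 e2 e3 e4 ⊢
    linear_combination (norm := module) -e1 + e4 - e3
  · intro a b c
    have e1 := h4 a b c
    have e2 := h3 a b c
    have e3 := h3 a c b
    simp only [LinearMap.add_apply, map_add] at e1 e2 e3 ⊢
    linear_combination (norm := module) e1 + e2 - e3
end
end

section
/- Let (A,◁,▷) be a pre-Novikov algebra and (B,⊣,⊢) a right Novikov dialgebra over a field k of characteristic 0. Define a bilinear operation ∘ on A ⊗ B by (a⊗x)∘(b⊗y) := (a▷b)⊗(x⊢y) − (b◁a)⊗(y⊣x) for a,b ∈ A and x,y ∈ B. Then (A⊗B, ∘) is a pre-Lie algebra. -/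
open TensorProduct

noncomputable section

variable {k : Type*} [Field k]
/-- The operation `(a⊗x)∘(b⊗y) := (a▷b)⊗(x⊢y) − (b◁a)⊗(y⊣x)` on the
tensor product of a pre-Novikov algebra and a right Novikov dialgebra is pre-Lie. -/
theorem induced_preLie_of_preNovikov_dialgebra (k A B : Type*) [Field k] [CharZero k]
    [AddCommGroup A] [Module k A] [AddCommGroup B] [Module k B]
    (l r : A →ₗ[k] A →ₗ[k] A) (hA : IsPreNovikov l r)
    (dl dr : B →ₗ[k] B →ₗ[k] B) (hB : IsRightNovikovDialgebra dl dr)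
    (op : A ⊗[k] B →ₗ[k] A ⊗[k] B →ₗ[k] A ⊗[k] B)
    (hop : ∀ (a b : A) (x y : B),
      op (a ⊗ₜ[k] x) (b ⊗ₜ[k] y) = r a b ⊗ₜ[k] dr x y - l b a ⊗ₜ[k] dl y x) :
    IsPreLie op := by
  obtain ⟨hP1, hP2, hP3, hP4⟩ := hA
  obtain ⟨hD1, hD2, hD3, hD4, hD5, hD6⟩ := hB
  -- derived dialgebra identities
  have e3 : ∀ u v w : B, dr (dr u v) w = dr (dl u v) w := by
    intro u v w
    have h := hD3 u v w
    rw [map_sub, LinearMap.sub_apply, sub_eq_zero] at h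
    exact h
  have e4 : ∀ u v w : B, dl u (dr v w) = dl u (dl v w) := by
    intro u v w
    have h := hD4 u v w
    rw [map_sub, sub_eq_zero] at h
    exact h
  have e1 : ∀ u v w : B, dr u (dr v w)
      = dl w (dl u v) + dr (dl u v) w - dl (dr u w) v := by
    intro u v w
    have h := hD5 u v w
    rw [map_sub, hD2 u w v, e3 u v w] at h
    linear_combination (norm := abel1) h
  have e5 : ∀ u v w : B, dl u (dl w v)
      = dl u (dl v w) - dl (dl u v) w + dl (dl u w) v := by
    intro u v w
    have h := hD6 u v w
    rw [map_sub, e4 u v w] at h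
    linear_combination (norm := abel1) -h
  have key : ∀ (a b c : A) (x y z : B),
      op (op (a ⊗ₜ[k] x) (b ⊗ₜ[k] y)) (c ⊗ₜ[k] z)
        - op (a ⊗ₜ[k] x) (op (b ⊗ₜ[k] y) (c ⊗ₜ[k] z))
      = op (op (b ⊗ₜ[k] y) (a ⊗ₜ[k] x)) (c ⊗ₜ[k] z)
        - op (b ⊗ₜ[k] y) (op (a ⊗ₜ[k] x) (c ⊗ₜ[k] z)) := by
    intro a b c x y z
    -- derived pre-Novikov identities (ground instances)
    have a1 : l (r b c) a = r (l b a) c + r (r b a) c := by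
      have h := hP3 b a c
      rw [map_add, LinearMap.add_apply] at h
      exact h.symm
    have a2 : l (r a c) b = r (l a b) c + r (r a b) c := by
      have h := hP3 a b c
      rw [map_add, LinearMap.add_apply] at h
      exact h.symm
    have a3 : r a (l c b)
        = l (r a c) b + l c (l a b) + l c (r a b) - l (l c a) b := by
      have h := hP2 a c b
      rw [map_add] at h
      linear_combination (norm := abel1) h
    have a4 : r b (l c a)
        = l (r b c) a + l c (l b a) + l c (r b a) - l (l c b) a := by
      have h := hP2 b c a
      rw [map_add] at h
      linear_combination (norm := abel1) h
    have a5 : l (l c b) a = l (l c a) b := hP4 c b a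
    have a6 : r b (r a c)
        = r (l b a) c + r (r b a) c + r a (r b c) - r (l a b) c - r (r a b) c := by
      have h := hP1 b a c
      rw [map_add, map_add, LinearMap.add_apply, LinearMap.add_apply] at h
      linear_combination (norm := abel1) h
    -- derived dialgebra identity (ground instance)
    have e6 : dr (dl y x) z
        = dr (dl x y) z + dl (dr y z) x - dl (dr x z) y
          + dl (dl z x) y - dl (dl z y) x := by
      have h := hD5 y x z
      rw [map_sub, hD2 y z x, hD1 y x z, e1 x y z, e5 z x y, e3 y x z] at h
      linear_combination (norm := abel1) -h
    rw [hop a b x y, hop b c y z, hop b a y x, hop a c x z]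
    simp only [map_sub, LinearMap.sub_apply, hop]
    simp only [hD1 y x z, e1 x y z, hD2 x z y, hD2 y z x, e4 z x y, e4 z y x,
      e3 x y z, e3 y x z, e5 z x y, e6, a1, a2, a3, a4, a5, a6,
      TensorProduct.tmul_add, TensorProduct.tmul_sub,
      TensorProduct.add_tmul, TensorProduct.sub_tmul]
    abel
  intro u v w
  induction u using TensorProduct.induction_on with
  | zero => simp
  | add u₁ u₂ h1 h2 =>
    simp only [map_add, LinearMap.add_apply]
    linear_combination (norm := abel1) h1 + h2
  | tmul a x =>
    induction v using TensorProduct.induction_on with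
    | zero => simp
    | add v₁ v₂ h1 h2 =>
      simp only [map_add, LinearMap.add_apply]
      linear_combination (norm := abel1) h1 + h2
    | tmul b y =>
      induction w using TensorProduct.induction_on with
      | zero => simp
      | add w₁ w₂ h1 h2 =>
        simp only [map_add, LinearMap.add_apply]
        linear_combination (norm := abel1) h1 + h2
      | tmul c z => exact key a b c x y z
end
end

section
/- Let A be a vector space over a field k of characteristic 0 with bilinear operations ◁, ▷, and equip L := A ⊗ k[t,t⁻¹] with the bilinear operation ∘ determined by (a⊗tⁱ)∘(b⊗tʲ) = i(a▷b)⊗t^{i+j−1} − j(b◁a)⊗t^{i+j−1} for all a,b ∈ A and i,j ∈ ℤ. Then (L,∘) is a pre-Lie algebra if and only if (A,◁,▷) is a pre-Novikov algebra. -/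
open TensorProduct

noncomputable section

variable {k : Type*} [Field k]
/-!
On pure tensors the product reads `(a ⊗ tⁱ) ∘ (b ⊗ tʲ) = (i (a ▷ b) - j (b ◁ a)) ⊗ t^(i+j-1)`, so
the pre-Lie identity for `a ⊗ tⁱ, b ⊗ tʲ, c ⊗ tᵐ` is an identity in `A ⊗ t^(i+j+m-2)` whose
coefficient is a polynomial in `i, j, m`. Its coefficients at `i² - i`, `ij`, `im` and `m - m²`
are (up to swapping `a` and `b`) the four pre-Novikov defects, so the identity holds for all
exponents iff the defects vanish; extracting them needs `2 ≠ 0` in `k`. As the pure tensors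
`a ⊗ tⁱ` span `A ⊗ k[t,t⁻¹]` and the associator is trilinear, checking
those suffices.
-/

open LaurentPolynomial

namespace LinearMap

variable {R M : Type*} [CommRing R] [AddCommGroup M] [Module R M]

def associator (op : M →ₗ[R] M →ₗ[R] M) : M →ₗ[R] M →ₗ[R] M →ₗ[R] M :=
  op.compr₂ op - (llcomp R M M M ∘ₗ op).compl₂ op

@[simp]
theorem associator_apply (op : M →ₗ[R] M →ₗ[R] M) (x y z : M) :
    op.associator x y z = op (op x y) z - op x (op y z) := rfl

end LinearMap

theorem isPreLie_iff_flip_associator {A : Type*} [AddCommGroup A] [Module k A]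
    (op : A →ₗ[k] A →ₗ[k] A) : IsPreLie op ↔ op.associator.flip = op.associator := by
  simp only [IsPreLie, LinearMap.ext_iff, LinearMap.flip_apply, LinearMap.associator_apply]
  exact ⟨fun h x y z => h y x z, fun h a b c => h b a c⟩

namespace LaurentPolynomial

variable {R A M : Type*} [CommSemiring R] [AddCommMonoid A] [Module R A]
  [AddCommMonoid M] [Module R M]

theorem tmul_T_injective (n : ℤ) : Function.Injective fun a : A => a ⊗ₜ[R] (T n : R[T;T⁻¹]) := by
  intro a b h
  have coeff_tmul_T (x : A) : TensorProduct.equivFinsuppOfBasisRight (AddMonoidAlgebra.basis ℤ R)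
      (x ⊗ₜ[R] (T n : R[T;T⁻¹])) n = x := by
    rw [TensorProduct.equivFinsuppOfBasisRight_apply_tmul_apply,
      show (T n : R[T;T⁻¹]) = AddMonoidAlgebra.basis ℤ R n from rfl, Module.Basis.repr_self,
        Finsupp.single_eq_same, one_smul]
  rw [← coeff_tmul_T a, ← coeff_tmul_T b]
  exact congr(TensorProduct.equivFinsuppOfBasisRight _ $h n)

theorem tensor_ext_tmul_T {f g : A ⊗[R] R[T;T⁻¹] →ₗ[R] M}
    (h : ∀ (a : A) (n : ℤ), f (a ⊗ₜ T n) = g (a ⊗ₜ T n)) : f = g :=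
  TensorProduct.ext <| LinearMap.ext fun a => (AddMonoidAlgebra.basis ℤ R).ext fun n => h a n

end LaurentPolynomial

section PreNovikov

variable {A : Type*} [AddCommGroup A] [Module k A] (l r : A →ₗ[k] A →ₗ[k] A)

def preNovikovDefect₁ (a b c : A) : A :=
  r a (r b c) - (r (l a b + r a b) c + r b (r a c) - r (l b a + r b a) c)

def preNovikovDefect₂ (a b c : A) : A :=
  r a (l b c) - (l (r a b) c + l b (l a c + r a c) - l (l b a) c)

def preNovikovDefect₃ (a b c : A) : A :=
  r (l a b + r a b) c - l (r a c) b

def preNovikovDefect₄ (a b c : A) : A :=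
  l (l a b) c - l (l a c) b

theorem isPreNovikov_iff_defects_eq_zero :
    IsPreNovikov l r ↔ (∀ a b c, preNovikovDefect₁ l r a b c = 0) ∧
      (∀ a b c, preNovikovDefect₂ l r a b c = 0) ∧ (∀ a b c, preNovikovDefect₃ l r a b c = 0) ∧
      (∀ a b c, preNovikovDefect₄ l a b c = 0) := by
  simp only [IsPreNovikov, preNovikovDefect₁, preNovikovDefect₂, preNovikovDefect₃,
    preNovikovDefect₄, sub_eq_zero]

def affMulCoeff (a : A) (i : ℤ) (b : A) (j : ℤ) : A :=
  i • r a b - j • l b a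

def affAssocCoeff (a : A) (i : ℤ) (b : A) (j : ℤ) (c : A) (m : ℤ) : A :=
  affMulCoeff l r (affMulCoeff l r a i b j) (i + j - 1) c m
    - affMulCoeff l r a i (affMulCoeff l r b j c m) (j + m - 1)

theorem affAssocCoeff_sub_swap (a b c : A) (i j m : ℤ) :
    affAssocCoeff l r a i b j c m - affAssocCoeff l r b j a i c m =
      (i * i - i) • preNovikovDefect₃ l r a b c - (j * j - j) • preNovikovDefect₃ l r b a c
        - (i * j) • preNovikovDefect₁ l r a b c
        + (i * m) • preNovikovDefect₂ l r a c b - (j * m) • preNovikovDefect₂ l r b c a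
        + (m - m * m) • preNovikovDefect₄ l c b a := by
  simp only [affAssocCoeff, affMulCoeff, preNovikovDefect₁, preNovikovDefect₂,
    preNovikovDefect₃, preNovikovDefect₄, map_sub, map_add, map_zsmul, LinearMap.sub_apply,
    LinearMap.add_apply, LinearMap.smul_apply]
  module

theorem isPreNovikov_iff_affAssocCoeff_comm [CharZero k] :
    IsPreNovikov l r ↔
      ∀ a b c (i j m : ℤ), affAssocCoeff l r a i b j c m = affAssocCoeff l r b j a i c m := by
  simp_rw [isPreNovikov_iff_defects_eq_zero, ← sub_eq_zero (a := affAssocCoeff l r _ _ _ _ _ _),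
    affAssocCoeff_sub_swap]
  constructor
  · rintro ⟨h₁, h₂, h₃, h₄⟩ a b c i j m
    simp [h₁, h₂, h₃, h₄]
  · intro h
    have eq_zero_of_two_zsmul {x : A} (hx : (2 : ℤ) • x = 0) : x = 0 := by
      rw [← Int.cast_smul_eq_zsmul k] at hx
      exact (smul_eq_zero.mp hx).resolve_left (by norm_num)
    refine ⟨fun a b c => ?_, fun a c b => ?_, fun a b c => ?_, fun c b a => ?_⟩
    · simpa using h a b c 1 1 0
    · simpa using h a b c 1 0 1
    · exact eq_zero_of_two_zsmul (by simpa using h a b c 2 0 0)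
    · exact eq_zero_of_two_zsmul (by simpa using h a b c 0 0 2)

end PreNovikov

section Affinization

variable {A : Type*} [AddCommGroup A] [Module k A] (l r : A →ₗ[k] A →ₗ[k] A)
  (op : A ⊗[k] k[T;T⁻¹] →ₗ[k] A ⊗[k] k[T;T⁻¹] →ₗ[k] A ⊗[k] k[T;T⁻¹])

theorem associator_tmul_T
    (hop : ∀ a b (i j : ℤ), op (a ⊗ₜ T i) (b ⊗ₜ T j) = affMulCoeff l r a i b j ⊗ₜ T (i + j - 1))
    (a b c : A) (i j m : ℤ) :
    op.associator (a ⊗ₜ T i) (b ⊗ₜ T j) (c ⊗ₜ T m) =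
      affAssocCoeff l r a i b j c m ⊗ₜ T (i + j + m - 2) := by
  rw [LinearMap.associator_apply, hop, hop, hop, hop, affAssocCoeff, sub_tmul,
    show i + j - 1 + m - 1 = i + j + m - 2 by ring,
    show i + (j + m - 1) - 1 = i + j + m - 2 by ring]

theorem isPreLie_iff_affAssocCoeff_comm
    (hop : ∀ a b (i j : ℤ), op (a ⊗ₜ T i) (b ⊗ₜ T j) = affMulCoeff l r a i b j ⊗ₜ T (i + j - 1)) :
    IsPreLie op ↔
      ∀ a b c (i j m : ℤ), affAssocCoeff l r a i b j c m = affAssocCoeff l r b j a i c m := by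
  rw [isPreLie_iff_flip_associator]
  constructor
  · intro h a b c i j m
    apply tmul_T_injective (R := k) (i + j + m - 2)
    have := congr($h (b ⊗ₜ T j) (a ⊗ₜ T i) (c ⊗ₜ T m))
    simp only [LinearMap.flip_apply, associator_tmul_T l r op hop] at this
    rwa [add_comm j i] at this
  · intro h
    refine tensor_ext_tmul_T fun a i => tensor_ext_tmul_T fun b j => tensor_ext_tmul_T fun c m => ?_
    simp only [LinearMap.flip_apply, associator_tmul_T l r op hop, h b a c j i m, add_comm j i]

end Affinization

/-- The operation
`(a⊗tⁱ)∘(b⊗tʲ) = i(a▷b)⊗t^{i+j−1} − j(b◁a)⊗t^{i+j−1}` on `A ⊗ k[t,t⁻¹]` is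
pre-Lie if and only if `(A, ◁, ▷)` is a pre-Novikov algebra. -/
theorem affinization_preLie_iff_preNovikov (k A : Type*) [Field k] [CharZero k]
    [AddCommGroup A] [Module k A]
    (l r : A →ₗ[k] A →ₗ[k] A)
    (op : A ⊗[k] LaurentPolynomial k →ₗ[k]
      A ⊗[k] LaurentPolynomial k →ₗ[k] A ⊗[k] LaurentPolynomial k)
    (hop : ∀ (a b : A) (i j : ℤ),
      op (a ⊗ₜ[k] (LaurentPolynomial.T i : LaurentPolynomial k))
          (b ⊗ₜ[k] (LaurentPolynomial.T j : LaurentPolynomial k))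
        = i • (r a b ⊗ₜ[k] (LaurentPolynomial.T (i + j - 1) : LaurentPolynomial k))
          - j • (l b a ⊗ₜ[k] (LaurentPolynomial.T (i + j - 1) : LaurentPolynomial k))) :
    IsPreLie op ↔ IsPreNovikov l r := by
  have hop' (a b : A) (i j : ℤ) :
      op (a ⊗ₜ T i) (b ⊗ₜ T j) = affMulCoeff l r a i b j ⊗ₜ T (i + j - 1) := by
    rw [hop, affMulCoeff, sub_tmul, smul_tmul', smul_tmul']
  exact (isPreLie_iff_affAssocCoeff_comm l r op hop').trans
    (isPreNovikov_iff_affAssocCoeff_comm l r).symm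
end
end

section
/- Let (A,α,β) be a pre-Novikov coalgebra and (B,Δα,Δβ) a right Novikov co-dialgebra over a field k of characteristic 0. Define δ : A⊗B → (A⊗B)⊗(A⊗B) by δ(a⊗x) := β(a)•Δβ(x) − (τα(a))•(τΔα(x)). Then (A⊗B, δ) is a pre-Lie coalgebra. -/
/-!
On `a ⊗ x` both sides of the pre-Lie identity for `δ` expand into sums of terms `p • q` with
`p` built from `α, β` applied to `a` and `q` from `Δα, Δβ` applied to `x`, with the same
transpositions acting on `p` and on `q`. The co-dialgebra identities rewrite every `q` through
`(id⊗Δβ)Δβ x`, `(Δβ⊗id)Δβ x`, `(id⊗Δα)Δα x` and `(Δα⊗id)Δα x`; modulo the last co-dialgebra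
identity, the coefficient of each of these is then a consequence of the pre-Novikov identities.
-/

open TensorProduct

noncomputable section

variable {k : Type*} [Field k]
section CoDefs
variable {A : Type*} [AddCommGroup A] [Module k A]

/-- `(f ⊗ id)` on `A⊗A`, landing in `A⊗(A⊗A)` via the associator. -/
def lmap3 (f : A →ₗ[k] A ⊗[k] A) : A ⊗[k] A →ₗ[k] A ⊗[k] (A ⊗[k] A) :=
  (TensorProduct.assoc k A A A).toLinearMap ∘ₗ TensorProduct.map f LinearMap.id

/-- `(id ⊗ f)` on `A⊗A`, landing in `A⊗(A⊗A)`. -/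
def rmap3 (f : A →ₗ[k] A ⊗[k] A) : A ⊗[k] A →ₗ[k] A ⊗[k] (A ⊗[k] A) :=
  TensorProduct.map LinearMap.id f

/-- `τ ⊗ id` on the triple tensor product `A⊗(A⊗A)`: `a⊗(b⊗c) ↦ b⊗(a⊗c)`. -/
def swap12 : A ⊗[k] (A ⊗[k] A) →ₗ[k] A ⊗[k] (A ⊗[k] A) :=
  (TensorProduct.assoc k A A A).toLinearMap ∘ₗ
    TensorProduct.map (TensorProduct.comm k A A).toLinearMap LinearMap.id ∘ₗ
    (TensorProduct.assoc k A A A).symm.toLinearMap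

/-- `id ⊗ τ` on the triple tensor product `A⊗(A⊗A)`: `a⊗(b⊗c) ↦ a⊗(c⊗b)`. -/
def swap23 : A ⊗[k] (A ⊗[k] A) →ₗ[k] A ⊗[k] (A ⊗[k] A) :=
  TensorProduct.map LinearMap.id (TensorProduct.comm k A A).toLinearMap

/-- The flip `τ` on `A ⊗ A`. -/
def tau2 : A ⊗[k] A →ₗ[k] A ⊗[k] A := (TensorProduct.comm k A A).toLinearMap

def IsPreNovikovCoalgebra (α β : A →ₗ[k] A ⊗[k] A) : Prop :=
  (∀ a : A, lmap3 α (α a) + swap12 (rmap3 α (β a)) - rmap3 (α + β) (α a)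
      - swap12 (lmap3 β (α a)) = 0) ∧
  (∀ a : A, rmap3 β (β a) + swap12 (lmap3 (α + β) (β a)) - lmap3 (α + β) (β a)
      - swap12 (rmap3 β (β a)) = 0) ∧
  (∀ a : A, swap23 (lmap3 β (α a)) - lmap3 (α + β) (β a) = 0) ∧
  (∀ a : A, swap23 (lmap3 α (α a)) - lmap3 α (α a) = 0)

/-- A right Novikov co-dialgebra `(B, Δα, Δβ)` (denoted `(A, Da, Db)` here). -/
def IsRightNovikovCoDialgebra (Da Db : A →ₗ[k] A ⊗[k] A) : Prop :=
  (∀ x : A, rmap3 Db (Db x) = swap12 (rmap3 Db (Db x))) ∧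
  (∀ x : A, rmap3 Da (Db x) = swap12 (rmap3 Da (Da x))) ∧
  (∀ x : A, lmap3 Db (Db x) = lmap3 Da (Db x)) ∧
  (∀ x : A, rmap3 Db (Da x) = rmap3 Da (Da x)) ∧
  (∀ x : A, rmap3 Db (Db x) - swap23 (rmap3 Da (Db x))
      = lmap3 Db (Db x) - swap23 (lmap3 Db (Da x))) ∧
  (∀ x : A, rmap3 Db (Da x) - swap23 (rmap3 Da (Da x))
      = lmap3 Da (Da x) - swap23 (lmap3 Da (Da x)))

def IsPreLieCoalgebra (δ : A →ₗ[k] A ⊗[k] A) : Prop :=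
  ∀ a : A, rmap3 δ (δ a) - swap12 (rmap3 δ (δ a)) = lmap3 δ (δ a) - swap12 (lmap3 δ (δ a))

def IsRightNovikovCoalgebra (Δ : A →ₗ[k] A ⊗[k] A) : Prop :=
  (∀ x : A, lmap3 Δ (Δ x) - swap23 (lmap3 Δ (Δ x))
      = rmap3 Δ (Δ x) - swap23 (rmap3 Δ (Δ x))) ∧
  (∀ x : A, rmap3 Δ (Δ x) = swap12 (rmap3 Δ (Δ x)))

end CoDefs

section TripleMaps

variable {A : Type*} [AddCommGroup A] [Module k A]

theorem lmap3_add (f g : A →ₗ[k] A ⊗[k] A) : lmap3 (f + g) = lmap3 f + lmap3 g := by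
  ext; simp [lmap3, add_tmul]

theorem rmap3_add (f g : A →ₗ[k] A ⊗[k] A) : rmap3 (f + g) = rmap3 f + rmap3 g := by
  ext; simp [rmap3, tmul_add]

theorem lmap3_sub (f g : A →ₗ[k] A ⊗[k] A) : lmap3 (f - g) = lmap3 f - lmap3 g := by
  ext; simp [lmap3, sub_tmul]

theorem rmap3_sub (f g : A →ₗ[k] A ⊗[k] A) : rmap3 (f - g) = rmap3 f - rmap3 g := by
  ext; simp [rmap3, tmul_sub]

theorem swap12_swap12 (z : A ⊗[k] (A ⊗[k] A)) : swap12 (swap12 z) = z := by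
  suffices swap12 ∘ₗ swap12 = LinearMap.id from LinearMap.congr_fun this z
  ext; simp [swap12]

theorem swap23_swap23 (z : A ⊗[k] (A ⊗[k] A)) : swap23 (swap23 z) = z := by
  suffices swap23 ∘ₗ swap23 = LinearMap.id from LinearMap.congr_fun this z
  ext; simp [swap23]

theorem swap23_swap12_swap23 (z : A ⊗[k] (A ⊗[k] A)) :
    swap23 (swap12 (swap23 z)) = swap12 (swap23 (swap12 z)) := by
  suffices swap23 ∘ₗ swap12 ∘ₗ swap23 = swap12 ∘ₗ swap23 ∘ₗ swap12 from
    LinearMap.congr_fun this z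
  ext; simp [swap12, swap23]

theorem lmap3_tau2_comp (f : A →ₗ[k] A ⊗[k] A) :
    lmap3 (tau2 ∘ₗ f) = swap12 ∘ₗ lmap3 f := by
  ext u v
  simp only [AlgebraTensorModule.curry_apply, curry_apply, LinearMap.coe_restrictScalars,
    LinearMap.coe_comp, Function.comp_apply, lmap3, tau2, map_tmul, LinearEquiv.coe_coe]
  induction f u using TensorProduct.induction_on with
  | zero => simp
  | tmul r s => simp [swap12]
  | add p q hp hq => simp only [add_tmul, map_add, hp, hq]

theorem rmap3_tau2_comp (f : A →ₗ[k] A ⊗[k] A) :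
    rmap3 (tau2 ∘ₗ f) = swap23 ∘ₗ rmap3 f := by
  ext; simp [rmap3, swap23, tau2]

theorem lmap3_tau2 (f : A →ₗ[k] A ⊗[k] A) (z : A ⊗[k] A) :
    lmap3 f (tau2 z) = swap23 (swap12 (rmap3 f z)) := by
  suffices lmap3 f ∘ₗ tau2 = swap23 ∘ₗ swap12 ∘ₗ rmap3 f from LinearMap.congr_fun this z
  ext u v
  simp only [AlgebraTensorModule.curry_apply, curry_apply, LinearMap.coe_restrictScalars,
    LinearMap.coe_comp, Function.comp_apply, rmap3, lmap3, tau2, map_tmul,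
    LinearEquiv.coe_coe, comm_tmul, LinearMap.id_coe, id_eq]
  induction f v using TensorProduct.induction_on with
  | zero => simp
  | tmul r s => simp [swap12, swap23]
  | add p q hp hq => simp only [add_tmul, map_add, tmul_add, hp, hq]

theorem rmap3_tau2 (f : A →ₗ[k] A ⊗[k] A) (z : A ⊗[k] A) :
    rmap3 f (tau2 z) = swap12 (swap23 (lmap3 f z)) := by
  suffices rmap3 f ∘ₗ tau2 = swap12 ∘ₗ swap23 ∘ₗ lmap3 f from LinearMap.congr_fun this z
  ext u v
  simp only [AlgebraTensorModule.curry_apply, curry_apply, LinearMap.coe_restrictScalars,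
    LinearMap.coe_comp, Function.comp_apply, rmap3, lmap3, tau2, map_tmul,
    LinearEquiv.coe_coe, comm_tmul, LinearMap.id_coe, id_eq]
  induction f u using TensorProduct.induction_on with
  | zero => simp
  | tmul r s => simp [swap12, swap23]
  | add p q hp hq => simp only [add_tmul, map_add, tmul_add, hp, hq]

end TripleMaps

section Mixing

variable {A B : Type*} [AddCommGroup A] [Module k A] [AddCommGroup B] [Module k B]

def tensorComul (f : A →ₗ[k] A ⊗[k] A) (g : B →ₗ[k] B ⊗[k] B) :
    A ⊗[k] B →ₗ[k] (A ⊗[k] B) ⊗[k] (A ⊗[k] B) :=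
  (tensorTensorTensorComm k A A B B).toLinearMap ∘ₗ map f g

/-- The threefold analogue of `•`: `(a₁⊗a₂⊗a₃) ⊗ (x₁⊗x₂⊗x₃) ↦ (a₁⊗x₁)⊗(a₂⊗x₂)⊗(a₃⊗x₃)`. -/
def mix3 : (A ⊗[k] (A ⊗[k] A)) ⊗[k] (B ⊗[k] (B ⊗[k] B)) →ₗ[k]
    (A ⊗[k] B) ⊗[k] ((A ⊗[k] B) ⊗[k] (A ⊗[k] B)) :=
  map LinearMap.id (tensorTensorTensorComm k A A B B).toLinearMap ∘ₗ
    (tensorTensorTensorComm k A (A ⊗[k] A) B (B ⊗[k] B)).toLinearMap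

theorem rmap3_tensorComul_tensorComul (f f' : A →ₗ[k] A ⊗[k] A) (g g' : B →ₗ[k] B ⊗[k] B)
    (a : A) (x : B) :
    rmap3 (tensorComul f g) (tensorComul f' g' (a ⊗ₜ x)) =
      mix3 (rmap3 f (f' a) ⊗ₜ rmap3 g (g' x)) := by
  suffices rmap3 (tensorComul f g) ∘ₗ (tensorTensorTensorComm k A A B B).toLinearMap =
      mix3 ∘ₗ map (rmap3 f) (rmap3 g) from LinearMap.congr_fun this (f' a ⊗ₜ g' x)
  ext; simp [rmap3, tensorComul, mix3]

theorem lmap3_tensorComul_tensorComul (f f' : A →ₗ[k] A ⊗[k] A) (g g' : B →ₗ[k] B ⊗[k] B)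
    (a : A) (x : B) :
    lmap3 (tensorComul f g) (tensorComul f' g' (a ⊗ₜ x)) =
      mix3 (lmap3 f (f' a) ⊗ₜ lmap3 g (g' x)) := by
  suffices lmap3 (tensorComul f g) ∘ₗ (tensorTensorTensorComm k A A B B).toLinearMap =
      mix3 ∘ₗ map (lmap3 f) (lmap3 g) from LinearMap.congr_fun this (f' a ⊗ₜ g' x)
  ext a₁ a₂ x₁ x₂
  simp only [AlgebraTensorModule.curry_apply, curry_apply, LinearMap.coe_restrictScalars,
    LinearMap.coe_comp, Function.comp_apply, LinearEquiv.coe_coe, tensorTensorTensorComm_tmul,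
    lmap3, tensorComul, map_tmul, LinearMap.id_coe, id_eq]
  induction f a₁ using TensorProduct.induction_on with
  | zero => simp
  | add p q hp hq => simp only [add_tmul, map_add, hp, hq]
  | tmul b₁ b₂ =>
    induction g x₁ using TensorProduct.induction_on with
    | zero => simp
    | add p q hp hq => simp only [add_tmul, tmul_add, map_add, hp, hq]
    | tmul y₁ y₂ => simp [mix3]

theorem swap12_mix3_tmul (p : A ⊗[k] (A ⊗[k] A)) (q : B ⊗[k] (B ⊗[k] B)) :
    swap12 (mix3 (p ⊗ₜ q)) = mix3 (swap12 p ⊗ₜ[k] swap12 q) := by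
  suffices swap12 ∘ₗ (mix3 : _ →ₗ[k] (A ⊗[k] B) ⊗[k] ((A ⊗[k] B) ⊗[k] (A ⊗[k] B))) =
      mix3 ∘ₗ map swap12 swap12 from LinearMap.congr_fun this (p ⊗ₜ q)
  ext; simp [mix3, swap12]

end Mixing

section PreLieDefect

variable {L : Type*} [AddCommGroup L] [Module k L]

def preLieDefect (δ : L →ₗ[k] L ⊗[k] L) : L →ₗ[k] L ⊗[k] (L ⊗[k] L) :=
  (rmap3 δ - swap12 ∘ₗ rmap3 δ - (lmap3 δ - swap12 ∘ₗ lmap3 δ)) ∘ₗ δ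

theorem isPreLieCoalgebra_iff_preLieDefect_eq_zero (δ : L →ₗ[k] L ⊗[k] L) :
    IsPreLieCoalgebra δ ↔ preLieDefect δ = 0 := by
  simp [IsPreLieCoalgebra, preLieDefect, LinearMap.ext_iff, sub_eq_zero]

end PreLieDefect

section Relations

variable {A : Type*} [AddCommGroup A] [Module k A]

theorem IsPreNovikovCoalgebra.swap23_lmap3_β_α {α β : A →ₗ[k] A ⊗[k] A}
    (hA : IsPreNovikovCoalgebra α β) (a : A) :
    swap23 (lmap3 β (α a)) = lmap3 α (β a) + lmap3 β (β a) := by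
  simpa [lmap3_add, sub_eq_zero] using hA.2.2.1 a

theorem IsPreNovikovCoalgebra.swap12_swap23_swap12_lmap3_α_α {α β : A →ₗ[k] A ⊗[k] A}
    (hA : IsPreNovikovCoalgebra α β) (a : A) :
    swap12 (swap23 (swap12 (lmap3 α (α a)))) = swap23 (swap12 (lmap3 α (α a))) := by
  rw [← swap23_swap12_swap23, sub_eq_zero.mp (hA.2.2.2 a)]

theorem IsRightNovikovCoDialgebra.lmap3_Db_Da {Da Db : A →ₗ[k] A ⊗[k] A}
    (hB : IsRightNovikovCoDialgebra Da Db) (x : A) :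
    lmap3 Db (Da x) =
      swap23 (lmap3 Db (Db x)) - swap23 (rmap3 Db (Db x)) + swap12 (rmap3 Da (Da x)) := by
  have h := congrArg swap23 (hB.2.2.2.2.1 x)
  simp only [map_sub, swap23_swap23, hB.2.1 x] at h
  linear_combination (norm := module) h

theorem IsRightNovikovCoDialgebra.swap23_lmap3_Da_Da_sub {Da Db : A →ₗ[k] A ⊗[k] A}
    (hB : IsRightNovikovCoDialgebra Da Db) (x : A) :
    swap23 (lmap3 Da (Da x) - rmap3 Da (Da x)) = lmap3 Da (Da x) - rmap3 Da (Da x) := by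
  have h := hB.2.2.2.2.2 x
  rw [hB.2.2.2.1 x] at h
  rw [map_sub]
  linear_combination (norm := module) h

end Relations

section Induced

variable {A B : Type*} [AddCommGroup A] [Module k A] [AddCommGroup B] [Module k B]

def inducedComul (α β : A →ₗ[k] A ⊗[k] A) (Da Db : B →ₗ[k] B ⊗[k] B) :
    A ⊗[k] B →ₗ[k] (A ⊗[k] B) ⊗[k] (A ⊗[k] B) :=
  tensorComul β Db - tensorComul (tau2 ∘ₗ α) (tau2 ∘ₗ Da)

theorem preLieDefect_inducedComul {α β : A →ₗ[k] A ⊗[k] A} (hA : IsPreNovikovCoalgebra α β)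
    {Da Db : B →ₗ[k] B ⊗[k] B} (hB : IsRightNovikovCoDialgebra Da Db) :
    preLieDefect (inducedComul α β Da Db) = 0 := by
  refine TensorProduct.ext' fun a x => ?_
  simp only [preLieDefect, inducedComul, LinearMap.comp_apply, LinearMap.sub_apply,
    LinearMap.zero_apply, rmap3_sub, lmap3_sub, map_sub, rmap3_tensorComul_tensorComul,
    lmap3_tensorComul_tensorComul, rmap3_tau2_comp, lmap3_tau2_comp, swap12_mix3_tmul,
    rmap3_tau2, lmap3_tau2, swap12_swap12, swap23_swap12_swap23]
  -- Rewrite every `B`-factor through `(id⊗Δβ)Δβ x`, `(Δβ⊗id)Δβ x`, `(id⊗Δα)Δα x` and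
  -- `(Δα⊗id)Δα x`, and the `A`-factors by the last two pre-Novikov identities. The coefficients
  -- left over are the first two pre-Novikov identities, plus the last co-dialgebra identity
  -- relating `(id⊗Δα)Δα x` and `(Δα⊗id)Δα x`.
  simp only [hA.swap23_lmap3_β_α, hA.swap12_swap23_swap12_lmap3_α_α, hB.lmap3_Db_Da, hB.2.1 x,
    ← hB.2.2.1 x, hB.2.2.2.1 x, ← hB.1 x, map_add, map_sub, tmul_add, tmul_sub, add_tmul,
    swap23_swap23]
  have hA1 := congrArg (fun p => mix3 (swap23 (swap12 p) ⊗ₜ[k] swap23 (swap12 (rmap3 Da (Da x)))))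
    (hA.1 a)
  have hA1_swap12 := congrArg
    (fun p => mix3 (swap12 (swap23 (swap12 p)) ⊗ₜ[k] swap12 (swap23 (swap12 (rmap3 Da (Da x))))))
    (hA.1 a)
  have hA2 := congrArg (fun p => mix3 (p ⊗ₜ[k] rmap3 Db (Db x))) (hA.2.1 a)
  have hB6 := congrArg (fun q => mix3 (swap23 (swap12 (lmap3 α (α a))) ⊗ₜ[k] swap23 (swap12 q)))
    (hB.swap23_lmap3_Da_Da_sub x)
  simp only [lmap3_add, rmap3_add, LinearMap.add_apply, map_add, map_sub, map_zero, tmul_sub,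
    add_tmul, sub_tmul, zero_tmul, swap12_swap12, swap23_swap12_swap23, hA.swap23_lmap3_β_α,
    hA.swap12_swap23_swap12_lmap3_α_α] at hA1 hA1_swap12 hA2 hB6
  linear_combination (norm := module) hA2 - hA1 + hA1_swap12 + hB6

end Induced

theorem induced_preLie_coalgebra_general (k A B : Type*) [Field k]
    [AddCommGroup A] [Module k A] [AddCommGroup B] [Module k B]
    (α β : A →ₗ[k] A ⊗[k] A) (hA : IsPreNovikovCoalgebra α β)
    (Da Db : B →ₗ[k] B ⊗[k] B) (hB : IsRightNovikovCoDialgebra Da Db) :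
    IsPreLieCoalgebra
      ((TensorProduct.tensorTensorTensorComm k A A B B).toLinearMap ∘ₗ
          TensorProduct.map β Db
        - (TensorProduct.tensorTensorTensorComm k A A B B).toLinearMap ∘ₗ
          TensorProduct.map (tau2 ∘ₗ α) (tau2 ∘ₗ Da)) :=
  (isPreLieCoalgebra_iff_preLieDefect_eq_zero _).2 (preLieDefect_inducedComul hA hB)

/-- The map `δ(a⊗x) := β(a)•Δβ(x) − τα(a)•τΔα(x)` on the tensor
product of a pre-Novikov coalgebra `(A, α, β)` and a right Novikov co-dialgebra
`(B, Δα, Δβ)` makes `(A⊗B, δ)` a pre-Lie coalgebra. Here `•` is the canonical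
isomorphism `(A⊗A)⊗(B⊗B) ≅ (A⊗B)⊗(A⊗B)`. -/
theorem induced_preLie_coalgebra (k A B : Type*) [Field k] [CharZero k]
    [AddCommGroup A] [Module k A] [AddCommGroup B] [Module k B]
    (α β : A →ₗ[k] A ⊗[k] A) (hA : IsPreNovikovCoalgebra α β)
    (Da Db : B →ₗ[k] B ⊗[k] B) (hB : IsRightNovikovCoDialgebra Da Db) :
    IsPreLieCoalgebra
      ((TensorProduct.tensorTensorTensorComm k A A B B).toLinearMap ∘ₗ
          TensorProduct.map β Db
        - (TensorProduct.tensorTensorTensorComm k A A B B).toLinearMap ∘ₗ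
          TensorProduct.map (tau2 ∘ₗ α) (tau2 ∘ₗ Da)) :=
  induced_preLie_coalgebra_general k A B α β hA Da Db hB
end
end

section
/- Let A be a finite-dimensional vector space over a field k of characteristic 0 with linear maps α, β : A → A⊗A. Define bilinear operations ◁', ▷' on the dual space A* by ⟨f◁'g, a⟩ = (f⊗g)(α(a)) and ⟨f▷'g, a⟩ = (f⊗g)(β(a)) for f,g ∈ A*, a ∈ A, where (f⊗g)(u⊗v) := f(u)g(v). Then (A,α,β) is a pre-Novikov coalgebra if and only if (A*, ◁', ▷') is a pre-Novikov algebra. -/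
open TensorProduct

noncomputable section

variable {k : Type*} [Field k]
/-!
Pairing `f ⊗ g ⊗ h ∈ A* ⊗ A* ⊗ A*` with `A ⊗ A ⊗ A` turns iterated dual products into iterated
coproducts: if `⋆, ⋆'` are dual to `δ, δ'`, then `⟨(f ⋆' g) ⋆ h, a⟩ = ⟨f ⊗ g ⊗ h, (δ' ⊗ id) δ a⟩`
and `⟨f ⋆ (g ⋆' h), a⟩ = ⟨f ⊗ g ⊗ h, (id ⊗ δ') δ a⟩`, while `τ ⊗ id` and `id ⊗ τ` only permute
`f, g, h`. Hence each identity of `(A*, ◁', ▷')`, evaluated at `a`, is the pairing of `f ⊗ g ⊗ h`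
with the corresponding coalgebra identity at `a`, and these pairings separate the points of
`A ⊗ A ⊗ A`.
-/

open Module

section Pairing
variable {A : Type*} [AddCommGroup A] [Module k A]

def pairing3 (f g h : Dual k A) : A ⊗[k] (A ⊗[k] A) →ₗ[k] k :=
  (TensorProduct.lid k k).toLinearMap ∘ₗ
    TensorProduct.map f ((TensorProduct.lid k k).toLinearMap ∘ₗ TensorProduct.map g h)

@[simp]
lemma pairing3_tmul (f g h : Dual k A) (a b c : A) :
    pairing3 f g h (a ⊗ₜ[k] (b ⊗ₜ[k] c)) = f a * (g b * h c) := by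
  simp [pairing3]

lemma pairing3_tmul_left (f g h : Dual k A) (a : A) (x : A ⊗[k] A) :
    pairing3 f g h (a ⊗ₜ[k] x) = f a * TensorProduct.lid k k (TensorProduct.map g h x) := by
  simp [pairing3]

lemma pairing3_assoc_tmul (f g h : Dual k A) (x : A ⊗[k] A) (c : A) :
    pairing3 f g h (TensorProduct.assoc k A A A (x ⊗ₜ[k] c))
      = TensorProduct.lid k k (TensorProduct.map f g x) * h c := by
  induction x using TensorProduct.induction_on with
  | zero => simp
  | tmul a b => simp [mul_assoc]
  | add x y hx hy => simp only [add_tmul, map_add, hx, hy, add_mul]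

lemma pairing3_swap12 (f g h : Dual k A) (x : A ⊗[k] (A ⊗[k] A)) :
    pairing3 f g h (swap12 x) = pairing3 g f h x :=
  LinearMap.congr_fun (show pairing3 f g h ∘ₗ swap12 = pairing3 g f h from
    TensorProduct.ext_threefold' fun a b c => by simp [swap12, mul_left_comm]) x

lemma pairing3_swap23 (f g h : Dual k A) (x : A ⊗[k] (A ⊗[k] A)) :
    pairing3 f g h (swap23 x) = pairing3 f h g x :=
  LinearMap.congr_fun (show pairing3 f g h ∘ₗ swap23 = pairing3 f h g from
    TensorProduct.ext_threefold' fun a b c => by simp [swap23, mul_comm]) x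

lemma eq_zero_iff_forall_pairing3 (x : A ⊗[k] (A ⊗[k] A)) :
    x = 0 ↔ ∀ f g h : Dual k A, pairing3 f g h x = 0 := by
  refine ⟨fun hx => by simp [hx], fun hx => ?_⟩
  let b := Basis.ofVectorSpace k A
  let B := b.tensorProduct (b.tensorProduct b)
  have coord_eq (i j l) : B.coord (i, (j, l)) = pairing3 (b.coord i) (b.coord j) (b.coord l) :=
    TensorProduct.ext_threefold' fun u v w => by simp [B, mul_comm]
  exact B.forall_coord_eq_zero_iff.mp fun ⟨i, j, l⟩ => by rw [coord_eq]; exact hx _ _ _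

end Pairing

section DualMul
variable {A : Type*} [AddCommGroup A] [Module k A]

def IsDualMul (δ : A →ₗ[k] A ⊗[k] A) (m : Dual k A →ₗ[k] Dual k A →ₗ[k] Dual k A) : Prop :=
  ∀ f g a, m f g a = TensorProduct.lid k k (TensorProduct.map f g (δ a))

variable {δ δ' : A →ₗ[k] A ⊗[k] A} {m m' : Dual k A →ₗ[k] Dual k A →ₗ[k] Dual k A}

lemma IsDualMul.add (hm : IsDualMul δ m) (hm' : IsDualMul δ' m') :
    IsDualMul (δ + δ') (m + m') := fun f g a => by
  simp [hm f g a, hm' f g a]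

lemma IsDualMul.apply_apply_right (hm : IsDualMul δ m) (hm' : IsDualMul δ' m')
    (f g h : Dual k A) (a : A) : m f (m' g h) a = pairing3 f g h (rmap3 δ' (δ a)) := by
  rw [hm]
  induction δ a using TensorProduct.induction_on with
  | zero => simp
  | tmul u v => simp only [rmap3, map_tmul, LinearMap.id_coe, id_eq, lid_tmul, smul_eq_mul,
      pairing3_tmul_left, hm' g h v]
  | add x y hx hy => simp only [map_add, hx, hy]

lemma IsDualMul.apply_apply_left (hm : IsDualMul δ m) (hm' : IsDualMul δ' m')
    (f g h : Dual k A) (a : A) : m (m' f g) h a = pairing3 f g h (lmap3 δ' (δ a)) := by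
  rw [hm]
  induction δ a using TensorProduct.induction_on with
  | zero => simp
  | tmul u v => simp only [lmap3, LinearMap.comp_apply, map_tmul, LinearMap.id_coe, id_eq,
      LinearEquiv.coe_coe, lid_tmul, smul_eq_mul, pairing3_assoc_tmul, hm' f g u]
  | add x y hx hy => simp only [map_add, hx, hy]

variable {α β : A →ₗ[k] A ⊗[k] A} {l r : Dual k A →ₗ[k] Dual k A →ₗ[k] Dual k A}

lemma IsDualMul.coaxiom₁_iff (hl : IsDualMul α l) (hr : IsDualMul β r) :
    (∀ a, lmap3 α (α a) + swap12 (rmap3 α (β a)) - rmap3 (α + β) (α a)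
      - swap12 (lmap3 β (α a)) = 0) ↔
    ∀ f g h, r f (l g h) = l (r f g) h + l g (l f h + r f h) - l (l g f) h := by
  simp_rw [eq_zero_iff_forall_pairing3, map_sub, map_add, pairing3_swap12,
    ← hl.apply_apply_left hl, ← hr.apply_apply_right hl, ← hl.apply_apply_right (hl.add hr),
    ← hl.apply_apply_left hr, LinearMap.ext_iff, LinearMap.sub_apply]
  simp only [map_add, LinearMap.add_apply]
  exact ⟨fun H f g h a => by linear_combination H a g f h,
    fun H a f g h => by linear_combination H g f h a⟩

lemma IsDualMul.coaxiom₂_iff (hl : IsDualMul α l) (hr : IsDualMul β r) :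
    (∀ a, rmap3 β (β a) + swap12 (lmap3 (α + β) (β a)) - lmap3 (α + β) (β a)
      - swap12 (rmap3 β (β a)) = 0) ↔
    ∀ f g h, r f (r g h) = r (l f g + r f g) h + r g (r f h) - r (l g f + r g f) h := by
  simp_rw [eq_zero_iff_forall_pairing3, map_sub, map_add, pairing3_swap12,
    ← hr.apply_apply_right hr, ← hr.apply_apply_left (hl.add hr),
    LinearMap.ext_iff, LinearMap.sub_apply]
  simp only [map_add, LinearMap.add_apply]
  exact ⟨fun H f g h a => by linear_combination H a f g h,
    fun H a f g h => by linear_combination H f g h a⟩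

lemma IsDualMul.coaxiom₃_iff (hl : IsDualMul α l) (hr : IsDualMul β r) :
    (∀ a, swap23 (lmap3 β (α a)) - lmap3 (α + β) (β a) = 0) ↔
    ∀ f g h, r (l f g + r f g) h = l (r f h) g := by
  simp_rw [eq_zero_iff_forall_pairing3, map_sub, pairing3_swap23,
    ← hl.apply_apply_left hr, ← hr.apply_apply_left (hl.add hr), LinearMap.ext_iff]
  simp only [map_add, LinearMap.add_apply]
  exact ⟨fun H f g h a => by linear_combination -H a f g h,
    fun H a f g h => by linear_combination -H f g h a⟩

lemma IsDualMul.coaxiom₄_iff (hl : IsDualMul α l) :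
    (∀ a, swap23 (lmap3 α (α a)) - lmap3 α (α a) = 0) ↔
    ∀ f g h, l (l f g) h = l (l f h) g := by
  simp_rw [eq_zero_iff_forall_pairing3, map_sub, pairing3_swap23,
    ← hl.apply_apply_left hl, LinearMap.ext_iff]
  exact ⟨fun H f g h a => by linear_combination -H a f g h,
    fun H a f g h => by linear_combination -H f g h a⟩

end DualMul

theorem preNovikov_coalgebra_iff_dual_preNovikov_general (k A : Type*) [Field k]
    [AddCommGroup A] [Module k A]
    (α β : A →ₗ[k] A ⊗[k] A)
    (l' r' : Module.Dual k A →ₗ[k] Module.Dual k A →ₗ[k] Module.Dual k A)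
    (hl' : ∀ (f g : Module.Dual k A) (a : A),
      l' f g a = TensorProduct.lid k k (TensorProduct.map f g (α a)))
    (hr' : ∀ (f g : Module.Dual k A) (a : A),
      r' f g a = TensorProduct.lid k k (TensorProduct.map f g (β a))) :
    IsPreNovikovCoalgebra α β ↔ IsPreNovikov l' r' := by
  have hl : IsDualMul α l' := hl'
  have hr : IsDualMul β r' := hr'
  rw [IsPreNovikovCoalgebra, IsPreNovikov, hl.coaxiom₁_iff hr, hl.coaxiom₂_iff hr,
    hl.coaxiom₃_iff hr, hl.coaxiom₄_iff]
  exact and_left_comm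

/-- For a finite-dimensional vector space `A` with linear maps
`α, β : A → A⊗A`, and the dual operations `⟨f◁'g, a⟩ = (f⊗g)(α(a))`,
`⟨f▷'g, a⟩ = (f⊗g)(β(a))` on `A*`, `(A, α, β)` is a pre-Novikov coalgebra if and
only if `(A*, ◁', ▷')` is a pre-Novikov algebra. -/
theorem preNovikov_coalgebra_iff_dual_preNovikov (k A : Type*) [Field k] [CharZero k]
    [AddCommGroup A] [Module k A] [FiniteDimensional k A]
    (α β : A →ₗ[k] A ⊗[k] A)
    (l' r' : Module.Dual k A →ₗ[k] Module.Dual k A →ₗ[k] Module.Dual k A)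
    (hl' : ∀ (f g : Module.Dual k A) (a : A),
      l' f g a = TensorProduct.lid k k (TensorProduct.map f g (α a)))
    (hr' : ∀ (f g : Module.Dual k A) (a : A),
      r' f g a = TensorProduct.lid k k (TensorProduct.map f g (β a))) :
    IsPreNovikovCoalgebra α β ↔ IsPreNovikov l' r' :=
  preNovikov_coalgebra_iff_dual_preNovikov_general k A α β l' r' hl' hr'
end
end

section
/- Let (A,∘,ω) be a finite-dimensional quasi-Frobenius Novikov algebra over a field k of characteristic 0. Then there exist unique bilinear operations ◁, ▷ on A satisfying ω(a▷b,c) = ω(a∘c + c∘a, b) and ω(a◁b,c) = ω(a, c∘b) for all a,b,c ∈ A; moreover (A,◁,▷) is a pre-Novikov algebra and a◁b + a▷b = a∘b for all a,b ∈ A. -/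
open TensorProduct

noncomputable section

variable {k : Type*} [Field k]
/-- A finite-dimensional quasi-Frobenius Novikov algebra `(A, ∘, ω)`
admits unique bilinear operations `◁, ▷` with `ω(a▷b,c) = ω(a∘c + c∘a, b)` and
`ω(a◁b,c) = ω(a, c∘b)`; moreover these form a pre-Novikov algebra whose sum is `∘`. -/
theorem quasiFrobenius_novikov_compatible_preNovikov (k A : Type*) [Field k] [CharZero k]
    [AddCommGroup A] [Module k A] [FiniteDimensional k A]
    (mul : A →ₗ[k] A →ₗ[k] A) (hN : IsNovikov mul)
    (ω : A →ₗ[k] A →ₗ[k] k)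
    (hskew : ∀ a b : A, ω a b = - ω b a)
    (hnd : ∀ a : A, (∀ b : A, ω a b = 0) → a = 0)
    (hqf : ∀ a b c : A, ω (mul a b) c - ω (mul a c + mul c a) b + ω (mul c b) a = 0) :
    (∃! lr : (A →ₗ[k] A →ₗ[k] A) × (A →ₗ[k] A →ₗ[k] A),
      (∀ a b c : A, ω (lr.2 a b) c = ω (mul a c + mul c a) b) ∧
      (∀ a b c : A, ω (lr.1 a b) c = ω a (mul c b))) ∧
    (∀ l r : A →ₗ[k] A →ₗ[k] A,
      (∀ a b c : A, ω (r a b) c = ω (mul a c + mul c a) b) →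
      (∀ a b c : A, ω (l a b) c = ω a (mul c b)) →
      IsPreNovikov l r ∧ ∀ a b : A, l a b + r a b = mul a b) := by
  -- extensionality via nondegeneracy
  have eqA : ∀ x y : A, (∀ c : A, ω x c = ω y c) → x = y := by
    intro x y h
    have h0 : x - y = 0 := hnd _ (fun b => by rw [map_sub, LinearMap.sub_apply, h b, sub_self])
    exact sub_eq_zero.mp h0
  -- the musical isomorphism
  have hinj : Function.Injective ω := by
    intro x y hxy
    exact eqA x y (fun c => by rw [hxy])
  let e : A ≃ₗ[k] Module.Dual k A :=
    ω.linearEquivOfInjective hinj (Subspace.dual_finrank_eq (K := k) (V := A)).symm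
  have he : ∀ x : A, (e x : Module.Dual k A) = ω x := fun x => rfl
  -- the canonical right operation
  let r₀ : A →ₗ[k] A →ₗ[k] A := LinearMap.mk₂ k
    (fun a b => e.symm ((ω.flip b).comp (mul a + mul.flip a)))
    (fun a a' b => by
      simp only [map_add, LinearMap.comp_add, LinearMap.add_comp]
      try abel)
    (fun s a b => by
      simp only [map_smul, smul_add, LinearMap.comp_smul, LinearMap.smul_comp,
        LinearMap.comp_add, LinearMap.add_comp, map_add]
      try abel)
    (fun a b b' => by
      simp only [map_add, LinearMap.comp_add, LinearMap.add_comp]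
      try abel)
    (fun s a b => by
      simp only [map_smul, smul_add, LinearMap.comp_smul, LinearMap.smul_comp,
        LinearMap.comp_add, LinearMap.add_comp, map_add]
      try abel)
  have hr₀ : ∀ a b c : A, ω (r₀ a b) c = ω (mul a c + mul c a) b := by
    intro a b c
    show (e (e.symm ((ω.flip b).comp (mul a + mul.flip a)))) c = _
    rw [e.apply_symm_apply]
    simp [LinearMap.flip_apply]
  -- the canonical left operation
  let l₀ : A →ₗ[k] A →ₗ[k] A := LinearMap.mk₂ k
    (fun a b => e.symm ((ω a).comp (mul.flip b)))
    (fun a a' b => by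
      simp only [map_add, LinearMap.comp_add, LinearMap.add_comp]
      try abel)
    (fun s a b => by
      simp only [map_smul, smul_add, LinearMap.comp_smul, LinearMap.smul_comp,
        LinearMap.comp_add, LinearMap.add_comp, map_add]
      try abel)
    (fun a b b' => by
      simp only [map_add, LinearMap.comp_add, LinearMap.add_comp]
      try abel)
    (fun s a b => by
      simp only [map_smul, smul_add, LinearMap.comp_smul, LinearMap.smul_comp,
        LinearMap.comp_add, LinearMap.add_comp, map_add]
      try abel)
  have hl₀ : ∀ a b c : A, ω (l₀ a b) c = ω a (mul c b) := by
    intro a b c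
    show (e (e.symm ((ω a).comp (mul.flip b)))) c = _
    rw [e.apply_symm_apply]
    simp [LinearMap.flip_apply]
  constructor
  · refine ⟨(l₀, r₀), ⟨hr₀, hl₀⟩, ?_⟩
    rintro ⟨l, r⟩ ⟨hr, hl⟩
    refine Prod.ext ?_ ?_
    · exact LinearMap.ext₂ fun a b => eqA _ _ fun c => by rw [hl a b c, hl₀ a b c]
    · exact LinearMap.ext₂ fun a b => eqA _ _ fun c => by rw [hr a b c, hr₀ a b c]
  · intro l r hr hl
    -- expanded versions
    have hr' : ∀ a b c : A, ω (r a b) c = ω (mul a c) b + ω (mul c a) b := by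
      intro a b c; rw [hr, map_add, LinearMap.add_apply]
    have hl₂ : ∀ x y z : A, ω z (l x y) = - ω x (mul z y) := by
      intro x y z; rw [hskew, hl]
    have hr₂ : ∀ x y z : A, ω z (r x y) = -(ω (mul x z) y + ω (mul z x) y) := by
      intro x y z; rw [hskew, hr']
    -- Novikov instances paired with ω
    have hP : ∀ x y z w : A, ω (mul (mul x y) z) w - ω (mul x (mul y z)) w
        = ω (mul (mul y x) z) w - ω (mul y (mul x z)) w := by
      intro x y z w
      rw [← LinearMap.sub_apply, ← map_sub, hN.1 x y z, map_sub, LinearMap.sub_apply]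
    have hP₂ : ∀ x y z w : A, ω w (mul (mul x y) z) - ω w (mul x (mul y z))
        = ω w (mul (mul y x) z) - ω w (mul y (mul x z)) := by
      intro x y z w
      rw [← map_sub, hN.1 x y z, map_sub]
    have hR : ∀ x y z w : A, ω (mul (mul x y) z) w = ω (mul (mul x z) y) w := by
      intro x y z w; rw [hN.2 x y z]
    have hR₂ : ∀ x y z w : A, ω w (mul (mul x y) z) = ω w (mul (mul x z) y) := by
      intro x y z w; rw [hN.2 x y z]
    -- the sum identity
    have hsum : ∀ a b : A, l a b + r a b = mul a b := by
      intro a b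
      refine eqA _ _ fun c => ?_
      rw [map_add, LinearMap.add_apply, hl a b c, hr' a b c]
      have hq := hqf a b c
      rw [map_add, LinearMap.add_apply] at hq
      linear_combination -hq + hskew a (mul c b)
    refine ⟨⟨?_, ?_, ?_, ?_⟩, hsum⟩
    · -- identity 1
      intro a b c
      simp only [hsum]
      refine eqA _ _ fun d => ?_
      rw [map_sub, LinearMap.sub_apply, map_add, LinearMap.add_apply]
      rw [hr' a (r b c) d, hr' (mul a b) c d, hr' b (r a c) d, hr' (mul b a) c d]
      rw [hr₂ b c (mul a d), hr₂ b c (mul d a), hr₂ a c (mul b d), hr₂ a c (mul d b)]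
      linear_combination -hP a b d c + hP d a b c - hP d b a c - 2 * hR d a b c
    · -- identity 2
      intro a b c
      simp only [hsum]
      refine eqA _ _ fun d => ?_
      rw [map_sub, LinearMap.sub_apply, map_add, LinearMap.add_apply]
      rw [hr' a (l b c) d, hl (r a b) c d, hl b (mul a c) d, hl (l b a) c d,
        hr' a b (mul d c), hl b a (mul d c), hl₂ b c (mul a d), hl₂ b c (mul d a)]
      linear_combination -hskew (mul a (mul d c)) b - hskew (mul (mul d c) a) b
        - hP₂ a d c b - 2 * hR₂ d a c b
    · -- identity 3
      intro a b c
      simp only [hsum]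
      refine eqA _ _ fun d => ?_
      rw [hr' (mul a b) c d, hl (r a c) b d, hr' a c (mul d b)]
      linear_combination hR a b d c - hP d a b c + hR d a b c
    · -- identity 4
      intro a b c
      refine eqA _ _ fun d => ?_
      rw [hl (l a b) c d, hl (l a c) b d, hl a b (mul d c), hl a c (mul d b)]
      exact hR₂ d c b a
end
end

section
/- Let (g,[·,·]) be a finite-dimensional Lie algebra over a field k of characteristic 0 equipped with a nondegenerate skew-symmetric bilinear form ω satisfying ω([x,y],z) + ω([y,z],x) + ω([z,x],y) = 0 for all x,y,z ∈ g. Then there is a unique bilinear operation ∘ on g satisfying ω(x∘y,z) = −ω(y,[x,z]) for all x,y,z ∈ g; moreover (g,∘) is a pre-Lie algebra and x∘y − y∘x = [x,y] for all x,y ∈ g. -/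
open TensorProduct

noncomputable section

variable {k : Type*} [Field k]
/-!
The operation is forced by nondegeneracy: `ω` identifies `g` with its dual, and `x ∘ ·` is the
transport of `-(ad x)ᵀ`. Transposing the Jacobi identity shows that `x ↦ (x ∘ ·)` is a
representation, `[x, y] ∘ z = x ∘ (y ∘ z) − y ∘ (x ∘ z)`, while the cocycle condition is exactly
`x ∘ y − y ∘ x = [x, y]`. Substituting the second identity into the first gives the pre-Lie law.
-/

theorem LinearMap.SeparatingLeft.injective {R M N P : Type*} [CommRing R] [AddCommGroup M]
    [Module R M] [AddCommGroup N] [Module R N] [AddCommGroup P] [Module R P]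
    {B : M →ₗ[R] N →ₗ[R] P} (hB : B.SeparatingLeft) : Function.Injective B :=
  LinearMap.ker_eq_bot.mp (LinearMap.separatingLeft_iff_ker_eq_bot.mp hB)

theorem LinearMap.BilinForm.Nondegenerate.existsUnique_bilinear_lift {V : Type*}
    [AddCommGroup V] [Module k V] [FiniteDimensional k V] {B : LinearMap.BilinForm k V}
    (hB : B.Nondegenerate) (T : V →ₗ[k] V →ₗ[k] Module.Dual k V) :
    ∃! op : V →ₗ[k] V →ₗ[k] V, ∀ x y z, B (op x y) z = T x y z := by
  refine ⟨T.compr₂ (B.toDual hB).symm.toLinearMap, fun x y z => by simp, fun op hop => ?_⟩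
  ext x y
  exact hB.1.injective (LinearMap.ext fun z => by simp [hop])

theorem isPreLie_of_sub_swap_eq_lie {L : Type*} [LieRing L] [LieAlgebra k L]
    {op : L →ₗ[k] L →ₗ[k] L} (hcomm : ∀ x y, op x y - op y x = ⁅x, y⁆)
    (hrep : ∀ a b c, op ⁅a, b⁆ c = op a (op b c) - op b (op a c)) : IsPreLie op := by
  intro a b c
  rw [sub_eq_sub_iff_sub_eq_sub, ← LinearMap.sub_apply, ← map_sub, hcomm, hrep]

section NegAdjointAd

variable {R L : Type*} [CommRing R] [LieRing L] [LieAlgebra R L]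

def IsNegAdjointAd (ω : L →ₗ[R] L →ₗ[R] R) (op : L →ₗ[R] L →ₗ[R] L) : Prop :=
  ∀ x y z, ω (op x y) z = -ω y ⁅x, z⁆

variable {ω : L →ₗ[R] L →ₗ[R] R} {op : L →ₗ[R] L →ₗ[R] L}

theorem IsNegAdjointAd.apply_lie (hop : IsNegAdjointAd ω op) (hω : ω.SeparatingLeft)
    (a b c : L) : op ⁅a, b⁆ c = op a (op b c) - op b (op a c) := by
  refine hω.injective (LinearMap.ext fun z => ?_)
  have hcomp : ∀ u v, ω (op u (op v c)) z = ω c ⁅v, ⁅u, z⁆⁆ := fun u v => by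
    rw [hop, hop, neg_neg]
  rw [map_sub, LinearMap.sub_apply, hcomp, hcomp, hop, lie_lie, map_sub, neg_sub]

theorem IsNegAdjointAd.apply_sub_apply_swap (hop : IsNegAdjointAd ω op)
    (hω : ω.SeparatingLeft) (hskew : ∀ x y, ω x y = -ω y x)
    (hcocycle : ∀ x y z, ω ⁅x, y⁆ z + ω ⁅y, z⁆ x + ω ⁅z, x⁆ y = 0) (x y : L) :
    op x y - op y x = ⁅x, y⁆ := by
  refine hω.injective (LinearMap.ext fun z => ?_)
  have hxz : ω y ⁅x, z⁆ = ω ⁅z, x⁆ y := by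
    rw [hskew, ← lie_skew, map_neg, LinearMap.neg_apply, neg_neg]
  rw [map_sub, LinearMap.sub_apply, hop, hop, hxz, hskew x]
  linear_combination -hcocycle x y z

end NegAdjointAd

theorem symplectic_lie_compatible_preLie_general (k g : Type*) [Field k]
    [LieRing g] [LieAlgebra k g] [FiniteDimensional k g]
    (ω : g →ₗ[k] g →ₗ[k] k)
    (hskew : ∀ x y : g, ω x y = - ω y x)
    (hnd : ∀ x : g, (∀ y : g, ω x y = 0) → x = 0)
    (hcocycle : ∀ x y z : g, ω ⁅x, y⁆ z + ω ⁅y, z⁆ x + ω ⁅z, x⁆ y = 0) :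
    (∃! op : g →ₗ[k] g →ₗ[k] g, ∀ x y z : g, ω (op x y) z = - ω y ⁅x, z⁆) ∧
    (∀ op : g →ₗ[k] g →ₗ[k] g, (∀ x y z : g, ω (op x y) z = - ω y ⁅x, z⁆) →
      IsPreLie op ∧ ∀ x y : g, op x y - op y x = ⁅x, y⁆) := by
  have hrefl : ω.IsRefl := fun x y h => by rw [hskew, h, neg_zero]
  have hω : LinearMap.BilinForm.Nondegenerate ω := hrefl.nondegenerate_iff_separatingLeft.mpr hnd
  refine ⟨?_, fun op hop => ?_⟩
  · -- the trilinear form `(x, y, z) ↦ -ω(y, [x, z])`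
    simpa using hω.existsUnique_bilinear_lift
      ((LinearMap.llcomp k g g k ∘ₗ (-ω)).compl₂ (LieAlgebra.ad k g : g →ₗ[k] Module.End k g)).flip
  · have hcomm := IsNegAdjointAd.apply_sub_apply_swap hop hnd hskew hcocycle
    exact ⟨isPreLie_of_sub_swap_eq_lie hcomm (IsNegAdjointAd.apply_lie hop hnd), hcomm⟩

/-- A finite-dimensional symplectic Lie algebra `(g, [·,·], ω)` admits
a unique bilinear operation `∘` with `ω(x∘y,z) = −ω(y,[x,z])`; moreover `∘` is
pre-Lie and `x∘y − y∘x = [x,y]`. -/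
theorem symplectic_lie_compatible_preLie (k g : Type*) [Field k] [CharZero k]
    [LieRing g] [LieAlgebra k g] [FiniteDimensional k g]
    (ω : g →ₗ[k] g →ₗ[k] k)
    (hskew : ∀ x y : g, ω x y = - ω y x)
    (hnd : ∀ x : g, (∀ y : g, ω x y = 0) → x = 0)
    (hcocycle : ∀ x y z : g, ω ⁅x, y⁆ z + ω ⁅y, z⁆ x + ω ⁅z, x⁆ y = 0) :
    (∃! op : g →ₗ[k] g →ₗ[k] g, ∀ x y z : g, ω (op x y) z = - ω y ⁅x, z⁆) ∧
    (∀ op : g →ₗ[k] g →ₗ[k] g, (∀ x y z : g, ω (op x y) z = - ω y ⁅x, z⁆) →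
      IsPreLie op ∧ ∀ x y : g, op x y - op y x = ⁅x, y⁆) :=
  symplectic_lie_compatible_preLie_general k g ω hskew hnd hcocycle
end
end

section
/- Let (B,⊣,⊢) be a right Novikov dialgebra over a field k of characteristic 0 with a nondegenerate symmetric bilinear form (·,·) such that, for all x,y,z ∈ B: −(y,x⊢z) − (y,z⊣x) + (y,z⊢x) + (y,x⊣z) = 0; −(y,z⊣x) + (y,z⊢x) = 0; (x⊢y,z) − (y,x⊢z) = 0; and (x⊢y,z) + (y⊣x,z) + (y,z⊣x) = 0. Then x⊣y = x⊢y for all x,y ∈ B, and, writing ⋄ for the common operation, (x⋄y,z) = −(x, y⋄z + z⋄y) holds for all x,y,z ∈ B; that is, (B,⋄,(·,·)) is a quadratic right Novikov algebra. -/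
open TensorProduct

noncomputable section

variable {k : Type*} [Field k]
/-- A right Novikov dialgebra `(B, ⊣, ⊢)` with a nondegenerate
symmetric bilinear form satisfying the four stated conditions has `⊣ = ⊢`, and the
common operation makes `(B, ⋄, (·,·))` a quadratic right Novikov algebra. -/
theorem dialgebra_with_form_is_quadratic_rightNovikov (k B : Type*) [Field k] [CharZero k]
    [AddCommGroup B] [Module k B]
    (dl dr : B →ₗ[k] B →ₗ[k] B) (hB : IsRightNovikovDialgebra dl dr)
    (bf : B →ₗ[k] B →ₗ[k] k)
    (hsymm : ∀ x y : B, bf x y = bf y x)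
    (hnd : ∀ x : B, (∀ y : B, bf x y = 0) → x = 0)
    (h1 : ∀ x y z : B,
      -(bf y (dr x z)) - bf y (dl z x) + bf y (dr z x) + bf y (dl x z) = 0)
    (h2 : ∀ x y z : B, -(bf y (dl z x)) + bf y (dr z x) = 0)
    (h3 : ∀ x y z : B, bf (dr x y) z - bf y (dr x z) = 0)
    (h4 : ∀ x y z : B, bf (dr x y) z + bf (dl y x) z + bf y (dl z x) = 0) :
    (∀ x y : B, dl x y = dr x y) ∧ IsRightNovikov dr ∧
      (∀ x y z : B, bf (dr x y) z = - bf x (dr y z + dr z y)) := by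
  obtain ⟨hb1, hb2, hb3, hb4, hb5, hb6⟩ := hB
  have heq : ∀ x y : B, dl x y = dr x y := by
    intro x y
    have h0 : dr x y - dl x y = 0 := by
      apply hnd
      intro z
      have h2' := h2 y z x
      rw [map_sub, LinearMap.sub_apply, hsymm (dr x y) z, hsymm (dl x y) z]
      linear_combination h2'
    exact (eq_of_sub_eq_zero h0).symm
  refine ⟨heq, ⟨?_, hb1⟩, ?_⟩
  · intro x y z
    have h5 := hb5 x y z
    rw [heq z y, heq (dr x z) y] at h5
    simp only [map_sub, LinearMap.sub_apply] at h5
    linear_combination (norm := module) -h5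
  · intro x y z
    have H4 := h4 y x z
    rw [heq x y, heq z y] at H4
    have H3 := h3 y x z
    simp only [map_add]
    linear_combination H4 - H3
end
end

section
/- Let (B,⋄,(·,·)) be a finite-dimensional quadratic right Novikov algebra over a field k of characteristic 0, and let Δ : B → B⊗B be the unique linear map satisfying (Δ(x), y⊗z)₂ = (x, y⋄z) for all x,y,z ∈ B, where (u₁⊗u₂, y⊗z)₂ := (u₁,y)(u₂,z). Then (B,Δ) is a right Novikov coalgebra, i.e. for all x ∈ B: (Δ⊗id)Δ(x) − (id⊗τ)(Δ⊗id)Δ(x) = (id⊗Δ)Δ(x) − (id⊗τ)(id⊗Δ)Δ(x) and (id⊗Δ)Δ(x) = (τ⊗id)(id⊗Δ)Δ(x). -/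
open TensorProduct

noncomputable section

variable {k : Type*} [Field k]
/-! Under the nondegenerate form, `Δ` is the adjoint of the multiplication `B ⊗ B → B`.
Consequently `(Δ ⊗ id) Δ` and `(id ⊗ Δ) Δ` are the adjoints of the two nested products
`y ⊗ z ⊗ w ↦ (y ⋄ z) ⋄ w` and `y ⊗ z ⊗ w ↦ y ⋄ (z ⋄ w)`, while the flips `τ ⊗ id`, `id ⊗ τ` are
self-adjoint for the induced form on `B ⊗ B ⊗ B`. Each coalgebra identity is thus adjoint to one
of the two right Novikov identities, and it holds because the induced form on `B ⊗ B ⊗ B` is again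
nondegenerate in finite dimension. -/

namespace LinearMap

section CommRing

variable {R M N M' N' P : Type*} [CommRing R]
  [AddCommGroup M] [Module R M] [AddCommGroup N] [Module R N]
  [AddCommGroup M'] [Module R M'] [AddCommGroup N'] [Module R N'] [AddCommGroup P] [Module R P]

@[simp] lemma BilinForm.tmul_apply_tmul (β : LinearMap.BilinForm R M)
    (γ : LinearMap.BilinForm R N) (m n : M) (m' n' : N) :
    β.tmul γ (m ⊗ₜ m') (n ⊗ₜ n') = β m n * γ m' n' :=
  mul_comm _ _

lemma BilinForm.tmul_apply_eq_lid_map (β : LinearMap.BilinForm R M)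
    (γ : LinearMap.BilinForm R N) (t : M ⊗[R] N) (m : M) (n : N) :
    β.tmul γ t (m ⊗ₜ n) =
      TensorProduct.lid R R (TensorProduct.map (LinearMap.flip β m) (LinearMap.flip γ n) t) := by
  induction t using TensorProduct.induction_on with
  | zero => simp
  | tmul a b =>
    simp only [map_tmul, lid_tmul, LinearMap.flip_apply, smul_eq_mul, BilinForm.tmul_apply_tmul]
  | add t s ht hs => simp [ht, hs]

lemma isAdjointPair_tmul_of_lid_map {α : LinearMap.BilinForm R P}
    {β : LinearMap.BilinForm R M} {γ : LinearMap.BilinForm R N}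
    {f : P →ₗ[R] M ⊗[R] N} {g : M ⊗[R] N →ₗ[R] P}
    (h : ∀ x m n, TensorProduct.lid R R
      (TensorProduct.map (LinearMap.flip β m) (LinearMap.flip γ n) (f x)) = α x (g (m ⊗ₜ n))) :
    IsAdjointPair α (β.tmul γ) f g := by
  intro x v
  induction v using TensorProduct.induction_on with
  | zero => simp
  | tmul m n => rw [BilinForm.tmul_apply_eq_lid_map, h]
  | add v w hv hw => simp [hv, hw]

lemma IsAdjointPair.map {β : LinearMap.BilinForm R M} {β' : LinearMap.BilinForm R M'}
    {γ : LinearMap.BilinForm R N} {γ' : LinearMap.BilinForm R N'}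
    {f : M →ₗ[R] M'} {g : M' →ₗ[R] M} {f' : N →ₗ[R] N'} {g' : N' →ₗ[R] N}
    (hf : IsAdjointPair β β' f g) (hf' : IsAdjointPair γ γ' f' g') :
    IsAdjointPair (β.tmul γ) (β'.tmul γ') (TensorProduct.map f f') (TensorProduct.map g g') := by
  rw [isAdjointPair_iff_comp_eq_compl₂]
  ext m n m' n'
  simp [hf m m', hf' n n']

lemma isAdjointPair_assoc (β₁ : LinearMap.BilinForm R M) (β₂ : LinearMap.BilinForm R N)
    (β₃ : LinearMap.BilinForm R P) :
    IsAdjointPair (BilinForm.tmul (β₁.tmul β₂) β₃) (β₁.tmul (β₂.tmul β₃))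
      (TensorProduct.assoc R M N P) (TensorProduct.assoc R M N P).symm := by
  refine isAdjointPair_iff_comp_eq_compl₂ (f := (TensorProduct.assoc R M N P).toLinearMap)
    (g := (TensorProduct.assoc R M N P).symm.toLinearMap) |>.mpr ?_
  ext
  simp [mul_assoc]

lemma BilinForm.tmul_eq_dualDistrib_comp_map (β : LinearMap.BilinForm R M)
    (γ : LinearMap.BilinForm R N) :
    β.tmul γ = TensorProduct.dualDistrib R M N ∘ₗ TensorProduct.map β γ := by
  ext m m' n n'
  exact BilinForm.tmul_apply_tmul β γ m n m' n'

lemma IsAdjointPair.apply_eq_of_separatingLeft {β : LinearMap.BilinForm R M}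
    {β' : LinearMap.BilinForm R N} (hβ' : β'.SeparatingLeft) {f f' : M → N} {g g' : N → M}
    (h : IsAdjointPair β β' f g) (h' : IsAdjointPair β β' f' g') (hg : ∀ v, g v = g' v)
    (x : M) : f x = f' x := by
  rw [← sub_eq_zero]
  refine hβ' _ fun v => ?_
  rw [map_sub, sub_apply, h, h', hg, sub_self]

end CommRing

variable {M N : Type*} [AddCommGroup M] [Module k M] [AddCommGroup N] [Module k N]

lemma SeparatingLeft.bijective [FiniteDimensional k M] {β : LinearMap.BilinForm k M}
    (hβ : β.SeparatingLeft) : Function.Bijective β := by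
  have hinj : Function.Injective β := ker_eq_bot.mp (separatingLeft_iff_ker_eq_bot.mp hβ)
  exact ⟨hinj, (injective_iff_surjective_of_finrank_eq_finrank
    Subspace.dual_finrank_eq.symm).mp hinj⟩

lemma SeparatingLeft.tmul [FiniteDimensional k M] [FiniteDimensional k N]
    {β : LinearMap.BilinForm k M} {γ : LinearMap.BilinForm k N}
    (hβ : β.SeparatingLeft) (hγ : γ.SeparatingLeft) : (β.tmul γ).SeparatingLeft := by
  rw [separatingLeft_iff_ker_eq_bot, ker_eq_bot, BilinForm.tmul_eq_dualDistrib_comp_map]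
  have hmap : Function.Injective (TensorProduct.map β γ) :=
    (TensorProduct.congr (LinearEquiv.ofBijective β hβ.bijective)
      (LinearEquiv.ofBijective γ hγ.bijective)).injective
  exact (TensorProduct.dualDistribEquiv k M N).injective.comp hmap

end LinearMap

section TripleTensor

open LinearMap

variable {A : Type*} [AddCommGroup A] [Module k A] (β : LinearMap.BilinForm k A)

lemma isAdjointPair_lmap3 {f : A →ₗ[k] A ⊗[k] A} {g : A ⊗[k] A →ₗ[k] A}
    (h : IsAdjointPair β (β.tmul β) f g) :
    IsAdjointPair (β.tmul β) (β.tmul (β.tmul β)) (lmap3 f)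
      (map g LinearMap.id ∘ₗ (TensorProduct.assoc k A A A).symm) :=
  (h.map isAdjointPair_id).comp (isAdjointPair_assoc β β β)

lemma isAdjointPair_rmap3 {f : A →ₗ[k] A ⊗[k] A} {g : A ⊗[k] A →ₗ[k] A}
    (h : IsAdjointPair β (β.tmul β) f g) :
    IsAdjointPair (β.tmul β) (β.tmul (β.tmul β)) (rmap3 f) (map LinearMap.id g) :=
  isAdjointPair_id.map h

lemma isAdjointPair_swap12 :
    IsAdjointPair (β.tmul (β.tmul β)) (β.tmul (β.tmul β)) swap12 swap12 := by
  refine isAdjointPair_iff_comp_eq_compl₂ (f := swap12) (g := swap12) |>.mpr ?_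
  ext
  simp only [AlgebraTensorModule.curry_apply, curry_apply, coe_restrictScalars, comp_apply,
    compl₂_apply, swap12, map_tmul, LinearEquiv.coe_coe, comm_tmul, id_coe, id_eq,
    BilinForm.tmul_apply_tmul, assoc_tmul, assoc_symm_tmul]
  ring

lemma isAdjointPair_swap23 :
    IsAdjointPair (β.tmul (β.tmul β)) (β.tmul (β.tmul β)) swap23 swap23 := by
  refine isAdjointPair_iff_comp_eq_compl₂ (f := swap23) (g := swap23) |>.mpr ?_
  ext
  simp only [AlgebraTensorModule.curry_apply, curry_apply, coe_restrictScalars, comp_apply,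
    compl₂_apply, swap23, map_tmul, LinearEquiv.coe_coe, comm_tmul, id_coe, id_eq,
    BilinForm.tmul_apply_tmul]
  ring

end TripleTensor

section NestedMul

variable {A : Type*} [AddCommGroup A] [Module k A] (d : A →ₗ[k] A →ₗ[k] A)

def leftNestedMul : A ⊗[k] (A ⊗[k] A) →ₗ[k] A :=
  lift d ∘ₗ map (lift d) LinearMap.id ∘ₗ (TensorProduct.assoc k A A A).symm.toLinearMap

def rightNestedMul : A ⊗[k] (A ⊗[k] A) →ₗ[k] A :=
  lift d ∘ₗ map LinearMap.id (lift d)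

@[simp] lemma leftNestedMul_tmul (x y z : A) :
    leftNestedMul d (x ⊗ₜ (y ⊗ₜ z)) = d (d x y) z := by
  simp [leftNestedMul]

@[simp] lemma rightNestedMul_tmul (x y z : A) :
    rightNestedMul d (x ⊗ₜ (y ⊗ₜ z)) = d x (d y z) := by
  simp [rightNestedMul]

variable {d}

lemma IsRightNovikov.leftNestedMul_sub_comp_swap23 (h : IsRightNovikov d) :
    leftNestedMul d - leftNestedMul d ∘ₗ swap23 = rightNestedMul d - rightNestedMul d ∘ₗ swap23 :=
  ext_threefold' fun x y z => by
    simpa [swap23] using sub_eq_sub_iff_sub_eq_sub.mp (h.1 x y z)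

lemma IsRightNovikov.rightNestedMul_comp_swap12 (h : IsRightNovikov d) :
    rightNestedMul d ∘ₗ swap12 = rightNestedMul d :=
  ext_threefold' fun x y z => by
    simpa [swap12] using h.2 y x z

end NestedMul

theorem quadratic_rightNovikov_coalgebra_general (k B : Type*) [Field k]
    [AddCommGroup B] [Module k B] [FiniteDimensional k B]
    (d : B →ₗ[k] B →ₗ[k] B) (bf : B →ₗ[k] B →ₗ[k] k)
    (hq : IsQuadraticRightNovikov d bf)
    (Δ : B →ₗ[k] B ⊗[k] B)
    (hΔ : ∀ x y z : B,
      TensorProduct.lid k k (TensorProduct.map (bf.flip y) (bf.flip z) (Δ x))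
        = bf x (d y z)) :
    IsRightNovikovCoalgebra Δ := by
  obtain ⟨hnov, -, (hsep : LinearMap.SeparatingLeft bf), -⟩ := hq
  have hsep₃ := hsep.tmul (hsep.tmul hsep)
  have hadj := LinearMap.isAdjointPair_tmul_of_lid_map (α := bf) (β := bf) (γ := bf) (f := Δ)
    (g := lift d) fun x y z => by rw [hΔ, lift.tmul]
  have hL := hadj.comp (isAdjointPair_lmap3 bf hadj)
  have hR := hadj.comp (isAdjointPair_rmap3 bf hadj)
  refine ⟨fun x => ?_, fun x => ?_⟩
  · exact (hL.sub (hL.comp (isAdjointPair_swap23 bf))).apply_eq_of_separatingLeft hsep₃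
      (hR.sub (hR.comp (isAdjointPair_swap23 bf)))
      (LinearMap.congr_fun hnov.leftNestedMul_sub_comp_swap23) x
  · exact hR.apply_eq_of_separatingLeft hsep₃ (hR.comp (isAdjointPair_swap12 bf))
      (fun v => (LinearMap.congr_fun hnov.rightNestedMul_comp_swap12 v).symm) x

/-- For a finite-dimensional quadratic right Novikov algebra
`(B, ⋄, (·,·))`, the dual `Δ` of `⋄` under the form, characterized by
`(Δ(x), y⊗z)₂ = (x, y⋄z)`, makes `(B, Δ)` a right Novikov coalgebra. -/
theorem quadratic_rightNovikov_coalgebra (k B : Type*) [Field k] [CharZero k]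
    [AddCommGroup B] [Module k B] [FiniteDimensional k B]
    (d : B →ₗ[k] B →ₗ[k] B) (bf : B →ₗ[k] B →ₗ[k] k)
    (hq : IsQuadraticRightNovikov d bf)
    (Δ : B →ₗ[k] B ⊗[k] B)
    (hΔ : ∀ x y z : B,
      TensorProduct.lid k k (TensorProduct.map (bf.flip y) (bf.flip z) (Δ x))
        = bf x (d y z)) :
    IsRightNovikovCoalgebra Δ :=
  quadratic_rightNovikov_coalgebra_general k B d bf hq Δ hΔ
end
end
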